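/- arXiv:math/0209010 — 10 statements merged into one kernel-verified Lean document; each statement's English description precedes it below -/
import Mathlib

section
/- Let K be a fine graph. Then for every edge e = (v,v') and every θ > 0, the set of edges e' incident to v with Ang_v(e,e') ≤ θ is finite. -/
/-- The angle at `v` between edges `(v,v1)` and `(v,v2)`: the length of a shortest
path from `v1` to `v2` avoiding the vertex `v` (`⊤` if there is none). -/
noncomputable def ang {V : Type*} (G : SimpleGraph V) (v v1 v2 : V) : ℕ∞ :=
  ⨅ (p : G.Walk v1 v2) (_ : v ∉ p.support), (p.length : ℕ∞)

/-- A graph is fine if for every `L` and every edge `e`, there are only finitely many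
circuits (cycles) of length at most `L` containing `e`. -/
def Fine {V : Type*} (G : SimpleGraph V) : Prop :=
  ∀ (L : ℕ) (x y : V), G.Adj x y →
    {p : G.Walk x x | p.IsCycle ∧ s(x, y) ∈ p.edges ∧ p.length ≤ L}.Finite

/-- In a fine graph, for every edge `e = (v,v')` and every `θ > 0`, there are only
finitely many edges `e' = (v,w)` incident to `v` with `Ang_v(e,e') ≤ θ`. -/
theorem stmt3 {V : Type*} (G : SimpleGraph V) (hfine : Fine G)
    (v v' : V) (h : G.Adj v v') (θ : ℕ) (hθ : 0 < θ) :
    {w : V | G.Adj v w ∧ ang G v v' w ≤ (θ : ℕ∞)}.Finite := by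
  classical
  set C : Set (G.Walk v v) :=
    {p : G.Walk v v | p.IsCycle ∧ s(v, v') ∈ p.edges ∧ p.length ≤ θ + 2} with hC
  have hCfin : C.Finite := hfine (θ + 2) v v' h
  have hsub : {w : V | G.Adj v w ∧ ang G v v' w ≤ (θ : ℕ∞)} ⊆
      insert v' ((fun p : G.Walk v v => p.getVert 1) '' C) := by
    rintro w ⟨hw, hang⟩
    by_cases hwv' : w = v'
    · exact Set.mem_insert_iff.2 (Or.inl hwv')
    -- extract a walk from v' to w avoiding v of length ≤ θ
    have hex : ∃ p : G.Walk v' w, v ∉ p.support ∧ p.length ≤ θ := by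
      by_contra hcon
      push_neg at hcon
      have : ((θ : ℕ∞) + 1) ≤ ang G v v' w := by
        refine le_iInf fun p => le_iInf fun hp => ?_
        have := hcon p hp
        have : θ + 1 ≤ p.length := this
        exact_mod_cast this
      have : ((θ : ℕ∞) + 1) ≤ (θ : ℕ∞) := this.trans hang
      exact absurd this (by exact_mod_cast Nat.not_succ_le_self θ)
    obtain ⟨p, hpv, hpl⟩ := hex
    -- replace by a path
    set p' : G.Walk v' w := p.bypass with hp'
    have hp'path : p'.IsPath := p.bypass_isPath
    have hp'v : v ∉ p'.support := fun hmem => hpv (p.support_bypass_subset hmem)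
    have hp'l : p'.length ≤ θ := le_trans p.length_bypass_le hpl
    -- build the cycle
    set r : G.Walk w v := (SimpleGraph.Walk.cons h p').reverse with hr
    have hrpath : r.IsPath := by
      rw [hr, SimpleGraph.Walk.isPath_reverse_iff]
      rw [SimpleGraph.Walk.cons_isPath_iff]
      exact ⟨hp'path, hp'v⟩
    have hredges : ∀ e, e ∈ r.edges ↔ e ∈ (SimpleGraph.Walk.cons h p').edges := by
      intro e
      rw [hr, SimpleGraph.Walk.edges_reverse, List.mem_reverse]
    have hnotedge : s(v, w) ∉ r.edges := by
      rw [hredges]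
      simp only [SimpleGraph.Walk.edges_cons, List.mem_cons]
      rintro (heq | hmem)
      · rw [Sym2.eq_iff] at heq
        rcases heq with ⟨-, h2⟩ | ⟨h1, h2⟩
        · exact hwv' h2
        · exact G.ne_of_adj hw h2.symm
      · exact hp'v (SimpleGraph.Walk.fst_mem_support_of_mem_edges p' hmem)
    set q : G.Walk v v := SimpleGraph.Walk.cons hw r with hq
    have hqcyc : q.IsCycle := by
      rw [hq, SimpleGraph.Walk.cons_isCycle_iff]
      exact ⟨hrpath, hnotedge⟩
    have hqedge : s(v, v') ∈ q.edges := by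
      rw [hq]
      simp only [SimpleGraph.Walk.edges_cons, List.mem_cons]
      right
      rw [hredges]
      simp [SimpleGraph.Walk.edges_cons]
    have hqlen : q.length ≤ θ + 2 := by
      rw [hq]
      simp only [SimpleGraph.Walk.length_cons, hr, SimpleGraph.Walk.length_reverse,
        SimpleGraph.Walk.length_cons]
      omega
    have hqC : q ∈ C := ⟨hqcyc, hqedge, hqlen⟩
    have hget : q.getVert 1 = w := by
      rw [hq]
      rw [SimpleGraph.Walk.getVert_cons_succ]
      simp [SimpleGraph.Walk.getVert_zero]
    exact Set.mem_insert_iff.2 (Or.inr ⟨q, hqC, hget⟩)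
  exact ((hCfin.image _).insert v').subset hsub
end

section
/- In a fine graph K, every cone Cone_{d,θ}(e,v) is a finite set of vertices, where Cone_{d,θ}(e,v) = { w : dist(w,v) ≤ d, and there exists a geodesic segment [v,w] all of whose consecutive-edge angles are ≤ θ and whose angle with e at v is ≤ θ }. -/
lemma ang_exists {V : Type*} {G : SimpleGraph V} {v v1 v2 : V} {θ : ℕ}
    (h : ang G v v1 v2 ≤ (θ : ℕ∞)) :
    ∃ p : G.Walk v1 v2, p.IsPath ∧ v ∉ p.support ∧ p.length ≤ θ := by
  classical
  by_contra hc
  push_neg at hc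
  have : ((θ : ℕ∞) + 1) ≤ ang G v v1 v2 := by
    refine le_iInf fun p => le_iInf fun hp => ?_
    have h2 := hc p.bypass p.bypass_isPath
      (fun hm => hp (p.support_bypass_subset hm))
    have : θ + 1 ≤ p.bypass.length := by omega
    calc ((θ : ℕ∞) + 1) ≤ (p.bypass.length : ℕ∞) := by exact_mod_cast this
      _ ≤ (p.length : ℕ∞) := by exact_mod_cast p.length_bypass_le
  have := le_trans this h
  have h3 : θ + 1 ≤ θ := by exact_mod_cast this
  omega


lemma fin_nbrs {V : Type*} {G : SimpleGraph V} (hfine : Fine G) (θ : ℕ) {v v' : V}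
    (h : G.Adj v v') : {u | G.Adj v u ∧ ang G v v' u ≤ (θ : ℕ∞)}.Finite := by
  classical
  have hS := hfine (θ + 2) v v' h
  refine Set.Finite.subset ((hS.biUnion (fun c _ => c.support.toFinset.finite_toSet)).insert v')
    ?_
  rintro u ⟨hadj, hang⟩
  by_cases huv : u = v'
  · exact Set.mem_insert_iff.2 (Or.inl huv)
  obtain ⟨q, hqpath, hqv, hqlen⟩ := ang_exists hang
  refine Set.mem_insert_iff.2 (Or.inr ?_)
  have hc1 : (SimpleGraph.Walk.cons h (q.concat hadj.symm)) ∈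
      {p : G.Walk v v | p.IsCycle ∧ s(v, v') ∈ p.edges ∧ p.length ≤ θ + 2} := by
    refine ⟨?_, ?_, ?_⟩
    · rw [SimpleGraph.Walk.cons_isCycle_iff]
      constructor
      · rw [← SimpleGraph.Walk.isPath_reverse_iff, SimpleGraph.Walk.reverse_concat]
        exact SimpleGraph.Walk.IsPath.cons hqpath.reverse
          (by rwa [SimpleGraph.Walk.support_reverse, List.mem_reverse])
      · rw [SimpleGraph.Walk.edges_concat, List.concat_eq_append, List.mem_append]
        rintro (h1 | h2)
        · exact hqv (q.fst_mem_support_of_mem_edges h1)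
        · simp only [List.mem_singleton, Sym2.eq_iff] at h2
          rcases h2 with ⟨h3, h4⟩ | ⟨h3, h4⟩
          · exact hadj.ne h3
          · exact huv h4.symm
    · simp
    · simp only [SimpleGraph.Walk.length_cons, SimpleGraph.Walk.length_concat]
      omega
  have hc2 : u ∈ (↑(SimpleGraph.Walk.cons h (q.concat hadj.symm)).support.toFinset : Set V) := by
    simp only [List.coe_toFinset, Set.mem_setOf_eq, SimpleGraph.Walk.support_cons,
      SimpleGraph.Walk.support_concat, List.concat_eq_append, List.mem_cons, List.mem_append]
    exact Or.inr (Or.inl q.end_mem_support)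
  exact Set.mem_biUnion hc1 hc2

/-- The cone of radius `d` and angle `θ` centred at the edge `(v,v')` (with apex `v`):
vertices `w` with `dist(v,w) ≤ d` admitting a geodesic `[v,w]` all of whose consecutive
angles are at most `θ` and whose angle with the edge at `v` is at most `θ`. -/
noncomputable def cone {V : Type*} (G : SimpleGraph V) (d θ : ℕ) (v v' : V) : Set V :=
  {w : V | ∃ p : G.Walk v w, p.length = G.dist v w ∧ p.length ≤ d ∧
    (∀ i, 0 < i → i < p.length →
      ang G (p.getVert i) (p.getVert (i - 1)) (p.getVert (i + 1)) ≤ (θ : ℕ∞)) ∧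
    (p.length = 0 ∨ ang G v v' (p.getVert 1) ≤ (θ : ℕ∞))}

/-- In a fine graph, cones are finite sets of vertices. -/
theorem stmt4 {V : Type*} (G : SimpleGraph V) (hfine : Fine G)
    (d θ : ℕ) (v v' : V) (h : G.Adj v v') :
    (cone G d θ v v').Finite := by
  induction d generalizing v v' with
  | zero =>
    refine Set.Finite.subset (Set.finite_singleton v) ?_
    rintro w ⟨p, _, hlen, _, _⟩
    have hw := SimpleGraph.Walk.eq_of_length_eq_zero (Nat.le_zero.mp hlen)
    exact hw ▸ rfl
  | succ n ih =>
    have hA := fin_nbrs hfine θ h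
    refine Set.Finite.subset
      ((hA.biUnion (fun u hu => ih u v hu.1.symm)).insert v) ?_
    rintro w ⟨p, hgeo, hlen, hint, hfst⟩
    cases p with
    | nil => exact Set.mem_insert_iff.2 (Or.inl rfl)
    | @cons _ u _ h' q =>
      refine Set.mem_insert_iff.2 (Or.inr ?_)
      have hpg : ∀ k, (SimpleGraph.Walk.cons h' q).getVert (k + 1) = q.getVert k :=
        fun k => SimpleGraph.Walk.getVert_cons_succ q h'
      have hu : u ∈ {u | G.Adj v u ∧ ang G v v' u ≤ (θ : ℕ∞)} := by
        refine ⟨h', ?_⟩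
        rcases hfst with h0 | hang
        · simp [SimpleGraph.Walk.length_cons] at h0
        · rwa [hpg 0, q.getVert_zero] at hang
      refine Set.mem_biUnion hu ?_
      -- w ∈ cone G n θ u v
      have hqd : q.length = G.dist u w := by
        have h1 : G.dist u w ≤ q.length := SimpleGraph.dist_le q
        obtain ⟨r, hr⟩ := (SimpleGraph.Walk.reachable q).exists_walk_length_eq_dist
        have h2 : G.dist v w ≤ (SimpleGraph.Walk.cons h' r).length := SimpleGraph.dist_le _
        rw [SimpleGraph.Walk.length_cons, hr] at h2
        rw [SimpleGraph.Walk.length_cons] at hgeo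
        omega
      refine ⟨q, hqd, by rw [SimpleGraph.Walk.length_cons] at hlen; omega, ?_, ?_⟩
      · intro i hi0 hil
        obtain ⟨j, rfl⟩ : ∃ j, i = j + 1 := ⟨i - 1, by omega⟩
        have := hint (j + 2) (by omega)
          (by rw [SimpleGraph.Walk.length_cons]; omega)
        rw [show j + 2 - 1 = j + 1 from rfl, show j + 2 + 1 = (j + 2) + 1 from rfl,
          show (j + 2 : ℕ) = (j + 1) + 1 from rfl, hpg (j + 1), hpg j, hpg (j + 2)] at this
        simpa using this
      · by_cases hq0 : q.length = 0
        · exact Or.inl hq0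
        · refine Or.inr ?_
          have := hint 1 one_pos (by rw [SimpleGraph.Walk.length_cons]; omega)
          rwa [show (1 : ℕ) - 1 = 0 from rfl, show (1 : ℕ) + 1 = 0 + 1 + 1 from rfl,
            SimpleGraph.Walk.getVert_zero, hpg 0, hpg 1, q.getVert_zero] at this
end

section
/- The cone Cone_{d,θ}(e,v) in a graph is contained in the union of cones of angle θ and radius 1 centered at edges both of whose endpoints lie in Cone_{d−1,θ}(e,v), for d > 1. Consequently, finiteness of cones follows by induction on the radius. -/
/-!
A geodesic witnessing `w ∈ Cone_{d,θ}(e,v)` has length `n ≤ d`. If `n ≤ 1`, then `w` already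
lies in the radius-one cone at `e` itself, whose endpoints lie in every cone at `e`. Otherwise
the prefixes of the geodesic witness that its vertices `n - 1` and `n - 2` lie in
`Cone_{d-1,θ}(e,v)`, and the last edge, together with the angle condition at vertex `n - 1`,
witnesses that `w` lies in the radius-one cone at the edge between them.
-/

open SimpleGraph

section Cone

variable {V : Type*} {G : SimpleGraph V}

lemma ang_self_eq_zero {v x : V} (hvx : v ≠ x) : ang G v x x = 0 :=
  nonpos_iff_eq_zero.mp <| (iInf₂_le Walk.nil (by simp [hvx])).trans_eq (by simp)

lemma cone_mono {d d' : ℕ} (hdd' : d ≤ d') (θ : ℕ) (v v' : V) :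
    cone G d θ v v' ⊆ cone G d' θ v v' := by
  rintro w ⟨p, hgeod, hlen, hangles, hfirst⟩
  exact ⟨p, hgeod, hlen.trans hdd', hangles, hfirst⟩

lemma self_mem_cone (d θ : ℕ) (v v' : V) : v ∈ cone G d θ v v' :=
  ⟨.nil, by simp, by simp, by simp, Or.inl rfl⟩

lemma mem_cone_one_of_adj {θ : ℕ} {a b w : V} (h : G.Adj a w) (hθ : ang G a b w ≤ θ) :
    w ∈ cone G 1 θ a b :=
  ⟨.cons h .nil, by simp [dist_eq_one_iff_adj.mpr h], by simp,
    fun i hi hi1 => by simp at hi1; omega, Or.inr hθ⟩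

lemma right_mem_cone {d : ℕ} (hd : 1 ≤ d) (θ : ℕ) {v v' : V} (h : G.Adj v v') :
    v' ∈ cone G d θ v v' :=
  cone_mono hd θ v v' <| mem_cone_one_of_adj h <| by simp [ang_self_eq_zero h.ne]

lemma getVert_mem_cone {θ : ℕ} {v v' w : V} (p : G.Walk v w) (hgeod : p.length = G.dist v w)
    (hangles : ∀ i, 0 < i → i < p.length →
      ang G (p.getVert i) (p.getVert (i - 1)) (p.getVert (i + 1)) ≤ (θ : ℕ∞))
    (hfirst : p.length = 0 ∨ ang G v v' (p.getVert 1) ≤ (θ : ℕ∞))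
    {k : ℕ} (hk : k ≤ p.length) :
    p.getVert k ∈ cone G k θ v v' := by
  have hlen : (p.take k).length = k := by simp [Walk.take_length, hk]
  refine ⟨p.take k, length_eq_dist_of_subwalk hgeod (p.isSubwalk_take k), hlen.le, ?_, ?_⟩
  · intro i hi hik
    simp only [Walk.take_getVert]
    rw [hlen] at hik
    rw [min_eq_right (by omega), min_eq_right (by omega), min_eq_right (by omega)]
    exact hangles i hi (by omega)
  · rw [hlen, Walk.take_getVert]
    rcases Nat.eq_zero_or_pos k with hk0 | hk0
    · exact Or.inl hk0
    · exact Or.inr <| by rw [min_eq_right hk0]; exact hfirst.resolve_left (by omega)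

end Cone

/-- For `d > 1`, the cone of radius `d` is contained in the union of the cones of
radius `1` and angle `θ` centred at edges both of whose endpoints lie in the cone of
radius `d - 1`. -/
theorem stmt5 {V : Type*} (G : SimpleGraph V) (d θ : ℕ) (hd : 1 < d) (v v' : V)
    (h : G.Adj v v') :
    cone G d θ v v' ⊆
      ⋃ (a : V) (b : V) (_ : G.Adj a b) (_ : a ∈ cone G (d - 1) θ v v')
        (_ : b ∈ cone G (d - 1) θ v v'), cone G 1 θ a b := by
  rintro w ⟨p, hgeod, hlen, hangles, hfirst⟩
  simp only [Set.mem_iUnion]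
  have hvert {k : ℕ} (hk : k ≤ p.length) (hkd : k ≤ d - 1) :
      p.getVert k ∈ cone G (d - 1) θ v v' :=
    cone_mono hkd θ v v' (getVert_mem_cone p hgeod hangles hfirst hk)
  set n := p.length
  rcases Nat.lt_or_ge n 2 with hn2 | hn2
  · refine ⟨v, v', h, self_mem_cone _ θ v v', right_mem_cone (by omega) θ h, ?_⟩
    simpa using cone_mono (by omega) θ v v' (getVert_mem_cone p hgeod hangles hfirst le_rfl)
  · have hpred : n - 1 + 1 = n := by omega
    have hend : p.getVert n = w := p.getVert_length
    have hlast : G.Adj (p.getVert (n - 1)) w := by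
      simpa [hpred, hend] using p.adj_getVert_succ (i := n - 1) (by omega)
    refine ⟨p.getVert (n - 1), p.getVert (n - 2), ?_, hvert (by omega) (by omega),
      hvert (by omega) (by omega), mem_cone_one_of_adj hlast ?_⟩
    · simpa [show n - 2 + 1 = n - 1 by omega] using
        (p.adj_getVert_succ (i := n - 2) (by omega)).symm
    · simpa [hpred, hend, show n - 1 - 1 = n - 2 by omega] using
        hangles (n - 1) (by omega) (by omega)
end

section
/- Let K be a δ-hyperbolic graph (geodesic metric space on its realization), and let [x,y] and [x,z] be geodesic segments with Ang_x([x,y],[x,z]) ≥ 50δ. Then the concatenation of the two segments is a geodesic from y to z; moreover every geodesic segment [y,z] passes through x, and the angle of [y,z] at x is at least Ang_x([x,y],[x,z]) − 50δ. -/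
/-- A graph is `δ`-hyperbolic: geodesic triangles are `δ`-thin, i.e. every vertex of one
side is within distance `δ` of the union of the other two sides. -/
def HypGraph {V : Type*} (G : SimpleGraph V) (δ : ℕ) : Prop :=
  ∀ {x y z : V} (p : G.Walk x y) (q : G.Walk y z) (r : G.Walk x z),
    p.length = G.dist x y → q.length = G.dist y z → r.length = G.dist x z →
    ∀ w ∈ r.support, ∃ u, (u ∈ p.support ∨ u ∈ q.support) ∧ G.dist w u ≤ δ

/-!
`ang G x` is the distance in `G` with the vertex `x` deleted, so it obeys the triangle inequality.
In a `δ`-thin triangle with a geodesic side `p` from `x`, going `2δ + 1` steps along `p` and then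
`δ` steps to another side never meets `x`; so the second vertex of `p` is joined to that side by an
`x`-avoiding path of length `≤ 3δ`. If a geodesic `r` from `y` to `z` missed `x`, doing this for
both `[x,y]` and `[x,z]` and following `r` in between (whose relevant piece has length `≤ 6δ + 2`,
both ends being `3δ + 1`-close to `x`) would give an angle `≤ 12δ + 2 < 50δ`. So `r` passes through
`x`, and its two halves are geodesics with the same endpoints as `[x,y]` and `[x,z]`; the same
argument applied to the degenerate triangles they form makes their second vertices `6δ`-close
away from `x`, so the angle at `x` drops by at most `12δ`.
-/

namespace SimpleGraph

variable {V : Type*} {G : SimpleGraph V} {x a b c u v : V}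

lemma ang_le_length (W : G.Walk a b) (hW : x ∉ W.support) : ang G x a b ≤ W.length :=
  iInf₂_le W hW

lemma ang_le_iff {n : ℕ} :
    ang G x a b ≤ n ↔ ∃ W : G.Walk a b, x ∉ W.support ∧ W.length ≤ n := by
  refine ⟨fun h => ?_, fun ⟨W, hW, hn⟩ => (ang_le_length W hW).trans (by exact_mod_cast hn)⟩
  have hlt : ang G x a b < n + 1 := (ENat.lt_add_one_iff (ENat.natCast_ne_top n)).mpr h
  simp only [ang, iInf_lt_iff] at hlt
  obtain ⟨W, hW, hlt⟩ := hlt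
  exact ⟨W, hW, by exact_mod_cast ENat.natCast_lt_add_one_iff.mp hlt⟩

lemma ang_comm : ang G x a b = ang G x b a := by
  suffices ∀ a b, ang G x a b ≤ ang G x b a from le_antisymm (this a b) (this b a)
  intro a b
  refine le_iInf₂ fun W hW => ?_
  simpa using ang_le_length W.reverse (by simpa using hW)

lemma ang_triangle : ang G x a c ≤ ang G x a b + ang G x b c := by
  induction hab : ang G x a b using ENat.recTopCoe with
  | top => simp
  | coe m =>
    induction hbc : ang G x b c using ENat.recTopCoe with
    | top => simp
    | coe n =>
      obtain ⟨W₁, hW₁, hm⟩ := ang_le_iff.mp hab.le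
      obtain ⟨W₂, hW₂, hn⟩ := ang_le_iff.mp hbc.le
      refine (ang_le_length (W₁.append W₂) (by simp [hW₁, hW₂])).trans ?_
      simp only [Walk.length_append]
      exact_mod_cast Nat.add_le_add hm hn

lemma dist_le_ang_add_one (hxv : G.Adj x v) {n : ℕ} (h : ang G x v b ≤ n) :
    G.dist x b ≤ n + 1 := by
  obtain ⟨W, -, hW⟩ := ang_le_iff.mp h
  exact (dist_le (.cons hxv W)).trans (by simpa using hW)

namespace Walk

lemma dist_start_getVert_add_dist_getVert_end (p : G.Walk u v) (hp : p.length = G.dist u v)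
    (i : ℕ) : G.dist u (p.getVert i) + G.dist (p.getVert i) v = p.length := by
  have h₁ : G.dist u (p.getVert i) ≤ i ⊓ p.length := (dist_le (p.take i)).trans_eq (by simp)
  have h₂ : G.dist (p.getVert i) v ≤ p.length - i := (dist_le (p.drop i)).trans_eq (by simp)
  have h₃ := (p.take i).reachable.dist_triangle_left v
  omega

lemma dist_start_getVert (p : G.Walk u v) (hp : p.length = G.dist u v) {i : ℕ}
    (hi : i ≤ p.length) : G.dist u (p.getVert i) = i := by
  have h₁ : G.dist u (p.getVert i) ≤ i := (dist_le (p.take i)).trans (by simp)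
  have h₂ : G.dist (p.getVert i) v ≤ p.length - i := (dist_le (p.drop i)).trans_eq (by simp)
  have := p.dist_start_getVert_add_dist_getVert_end hp i
  omega

lemma dist_getVert_end (p : G.Walk u v) (hp : p.length = G.dist u v) {i : ℕ}
    (hi : i ≤ p.length) : G.dist (p.getVert i) v = p.length - i := by
  have := p.dist_start_getVert_add_dist_getVert_end hp i
  rw [p.dist_start_getVert hp hi] at this
  omega

lemma sub_le_dist_getVert (p : G.Walk u v) (hp : p.length = G.dist u v) {i j : ℕ}
    (hj : j ≤ p.length) : j - i ≤ G.dist (p.getVert i) (p.getVert j) := by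
  have := (p.take i).reachable.dist_triangle_left (p.getVert j)
  rw [p.dist_start_getVert hp hj] at this
  have := (dist_le (p.take i)).trans_eq (p.take_length i)
  omega

lemma reachable_of_mem_support (p : G.Walk u v) {w : V} (hw : w ∈ p.support) :
    G.Reachable u w := by
  classical
  exact (p.takeUntil w hw).reachable

end Walk

lemma ang_getVert_le (p : G.Walk u v) {i j : ℕ} (hij : i ≤ j)
    (hx : ∀ k, i ≤ k → k ≤ j → p.getVert k ≠ x) :
    ang G x (p.getVert i) (p.getVert j) ≤ (j - i : ℕ) := by
  have hend : (p.drop i).getVert (j - i) = p.getVert j := by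
    rw [Walk.drop_getVert]; congr 1; omega
  refine (ang_le_length (((p.drop i).take (j - i)).copy rfl hend) fun hmem => ?_).trans ?_
  · rw [Walk.support_copy] at hmem
    obtain ⟨m, hm, -⟩ := Walk.mem_support_iff_exists_getVert.mp hmem
    rw [Walk.take_getVert, Walk.drop_getVert] at hm
    exact hx _ (by omega) (by omega) hm
  · rw [Walk.length_copy, Walk.take_length]
    exact_mod_cast min_le_left _ _

lemma ang_snd_getVert_le {y : V} (p : G.Walk x y) (hp : p.length = G.dist x y) {k : ℕ}
    (hk₁ : 1 ≤ k) (hk : k ≤ p.length) :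
    ang G x (p.getVert 1) (p.getVert k) ≤ (k - 1 : ℕ) := by
  refine ang_getVert_le p hk₁ fun m hm hmk hmx => ?_
  have := p.dist_start_getVert hp (hmk.trans hk)
  rw [hmx, dist_self] at this
  omega

lemma ang_le_dist_of_dist_lt (h : G.Reachable a b) (hd : G.dist a b < G.dist a x) :
    ang G x a b ≤ G.dist a b := by
  classical
  obtain ⟨W, hW⟩ := h.exists_walk_length_eq_dist
  refine hW ▸ ang_le_length W fun hx => ?_
  have := (dist_le (W.takeUntil x hx)).trans (W.length_takeUntil_le_length hx)
  omega

lemma ang_le_dist_of_mem_support {y z : V} (r : G.Walk y z) (hr : r.length = G.dist y z)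
    (hxr : x ∉ r.support) (ha : a ∈ r.support) (hb : b ∈ r.support) :
    ang G x a b ≤ G.dist a b := by
  have hseg {j k : ℕ} (hjk : j ≤ k) (hk : k ≤ r.length) :
      ang G x (r.getVert j) (r.getVert k) ≤ G.dist (r.getVert j) (r.getVert k) :=
    (ang_getVert_le r hjk fun m _ _ hm => hxr (hm ▸ r.getVert_mem_support m :)).trans
      (by exact_mod_cast r.sub_le_dist_getVert hr hk)
  obtain ⟨j, rfl, hj⟩ := Walk.mem_support_iff_exists_getVert.mp ha
  obtain ⟨k, rfl, hk⟩ := Walk.mem_support_iff_exists_getVert.mp hb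
  rcases le_total j k with hjk | hkj
  · exact hseg hjk hk
  · rw [ang_comm, dist_comm]
    exact hseg hkj hj

lemma ang_snd_le_of_mem_support {z : V} (hxv : G.Adj x v) (q : G.Walk x z)
    (hq : q.length = G.dist x z) (hw : b ∈ q.support) {n : ℕ} (hn : ang G x v b ≤ n) :
    ang G x v (q.getVert 1) ≤ (2 * n : ℕ) := by
  obtain ⟨k, rfl, hk⟩ := Walk.mem_support_iff_exists_getVert.mp hw
  obtain ⟨W, hWx, -⟩ := ang_le_iff.mp hn
  have hk₀ : k ≠ 0 := by
    rintro rfl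
    exact hWx (by simpa using W.end_mem_support)
  have hkn : k ≤ n + 1 := q.dist_start_getVert hq hk ▸ dist_le_ang_add_one hxv hn
  calc ang G x v (q.getVert 1)
      ≤ ang G x v (q.getVert k) + ang G x (q.getVert 1) (q.getVert k) := by
        rw [ang_comm (a := q.getVert 1)]; exact ang_triangle
    _ ≤ n + (k - 1 : ℕ) := add_le_add hn (ang_snd_getVert_le q hq (by omega) hk)
    _ ≤ (2 * n : ℕ) := by norm_cast; omega

lemma exists_mem_ang_snd_le_of_thin {y : V} {δ : ℕ} (p : G.Walk x y)
    (hp : p.length = G.dist x y) (hpn : 0 < p.length) (S : Set V) (hyS : y ∈ S)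
    (hS : ∀ u ∈ S, G.Reachable x u) (hthin : ∀ w ∈ p.support, ∃ u ∈ S, G.dist w u ≤ δ) :
    ∃ u ∈ S, ang G x (p.getVert 1) u ≤ (3 * δ : ℕ) := by
  by_cases hshort : p.length ≤ 2 * δ + 1
  · refine ⟨y, hyS, ?_⟩
    have := ang_snd_getVert_le p hp hpn le_rfl
    rw [p.getVert_length] at this
    exact this.trans (by norm_cast; omega)
  · -- a geodesic from `p.getVert (2δ + 1)` to a `δ`-close point of `S` cannot reach `x`
    obtain ⟨u, huS, hau⟩ := hthin _ (p.getVert_mem_support (2 * δ + 1))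
    have hax : G.dist (p.getVert (2 * δ + 1)) x = 2 * δ + 1 := by
      rw [dist_comm]; exact p.dist_start_getVert hp (by omega)
    have hau' : ang G x (p.getVert (2 * δ + 1)) u ≤ δ :=
      (ang_le_dist_of_dist_lt ((p.take _).reachable.symm.trans (hS u huS))
        (by omega)).trans (by exact_mod_cast hau)
    refine ⟨u, huS, ?_⟩
    calc ang G x (p.getVert 1) u
        ≤ ang G x (p.getVert 1) (p.getVert (2 * δ + 1)) + ang G x (p.getVert (2 * δ + 1)) u :=
          ang_triangle
      _ ≤ (2 * δ + 1 - 1 : ℕ) + δ :=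
          add_le_add (ang_snd_getVert_le p hp (by omega) (by omega)) hau'
      _ = (3 * δ : ℕ) := by norm_cast; omega

lemma exists_mem_ang_snd_le_of_lt_ang {y z a b : V} {δ : ℕ} (p : G.Walk x y) (q : G.Walk x z)
    (hp : p.length = G.dist x y) (hq : q.length = G.dist x z) (hpn : 0 < p.length)
    (r : G.Walk a b) (hyr : y ∈ r.support) (hxa : G.Reachable x a)
    (hthin : ∀ w ∈ p.support, ∃ u, (u ∈ q.support ∨ u ∈ r.support) ∧ G.dist w u ≤ δ)
    (hang : ((6 * δ : ℕ) : ℕ∞) < ang G x (p.getVert 1) (q.getVert 1)) :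
    ∃ u ∈ r.support, ang G x (p.getVert 1) u ≤ (3 * δ : ℕ) := by
  have hreach (u : V) (hu : u ∈ q.support ∨ u ∈ r.support) : G.Reachable x u :=
    hu.elim q.reachable_of_mem_support (fun hu => hxa.trans (r.reachable_of_mem_support hu))
  obtain ⟨u, hu | hu, hpu⟩ :=
    exists_mem_ang_snd_le_of_thin p hp hpn _ (Or.inr hyr) hreach hthin
  · have := ang_snd_le_of_mem_support (p.adj_snd (Walk.not_nil_iff_lt_length.mpr hpn)) q hq hu hpu
    exact absurd hang (not_lt.mpr (this.trans (by norm_cast; omega)))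
  · exact ⟨u, hu, hpu⟩

theorem mem_support_of_lt_ang {y z : V} {δ : ℕ} (hhyp : HypGraph G δ)
    (p : G.Walk x y) (q : G.Walk x z) (hp : p.length = G.dist x y) (hq : q.length = G.dist x z)
    (hpn : 0 < p.length) (hqn : 0 < q.length)
    (hang : ((12 * δ + 2 : ℕ) : ℕ∞) < ang G x (p.getVert 1) (q.getVert 1))
    (r : G.Walk y z) (hr : r.length = G.dist y z) : x ∈ r.support := by
  by_contra hxr
  have h6 : ((6 * δ : ℕ) : ℕ∞) < ang G x (p.getVert 1) (q.getVert 1) :=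
    lt_of_le_of_lt (by norm_cast; omega) hang
  have hthin_p (w : V) (hw : w ∈ p.support) :
      ∃ u, (u ∈ q.support ∨ u ∈ r.support) ∧ G.dist w u ≤ δ := by
    simpa using hhyp q r.reverse p hq (by simp [hr, dist_comm]) hp w hw
  obtain ⟨a, ha, hpa⟩ := exists_mem_ang_snd_le_of_lt_ang p q hp hq hpn r r.start_mem_support
    p.reachable hthin_p h6
  obtain ⟨b, hb, hqb⟩ := exists_mem_ang_snd_le_of_lt_ang q p hq hp hqn r r.end_mem_support
    p.reachable (hhyp p r q hp hr hq) (ang_comm ▸ h6)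
  have hxa := dist_le_ang_add_one (p.adj_snd (Walk.not_nil_iff_lt_length.mpr hpn)) hpa
  have hxb := dist_le_ang_add_one (q.adj_snd (Walk.not_nil_iff_lt_length.mpr hqn)) hqb
  have hab : G.dist a b ≤ G.dist a x + G.dist x b :=
    (p.reachable.trans (r.reachable_of_mem_support ha)).symm.dist_triangle_left b
  have hab' : ang G x a b ≤ (6 * δ + 2 : ℕ) :=
    (ang_le_dist_of_mem_support r hr hxr ha hb).trans (by rw [dist_comm] at hxa; norm_cast; omega)
  refine absurd hang (not_lt.mpr ?_)
  calc ang G x (p.getVert 1) (q.getVert 1)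
      ≤ ang G x (p.getVert 1) a + (ang G x a b + ang G x b (q.getVert 1)) :=
        ang_triangle.trans (add_le_add le_rfl ang_triangle)
    _ ≤ (3 * δ : ℕ) + ((6 * δ + 2 : ℕ) + (3 * δ : ℕ)) := by
        rw [ang_comm (a := b)]; gcongr
    _ = (12 * δ + 2 : ℕ) := by norm_cast; omega

lemma ang_snd_snd_le_of_length_eq_dist {y : V} {δ : ℕ} (hhyp : HypGraph G δ)
    (p p' : G.Walk x y) (hp : p.length = G.dist x y) (hp' : p'.length = G.dist x y)
    (hpn : 0 < p.length) : ang G x (p.getVert 1) (p'.getVert 1) ≤ (6 * δ : ℕ) := by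
  have hpn' : 0 < p'.length := hp' ▸ hp ▸ hpn
  have hthin (w : V) (hw : w ∈ p'.support) : ∃ u ∈ {u | u ∈ p.support}, G.dist w u ≤ δ := by
    obtain ⟨u, hu, hwu⟩ := hhyp p .nil p' hp (by simp) hp' w hw
    exact ⟨u, hu.elim id fun hu => List.mem_singleton.mp hu ▸ p.end_mem_support, hwu⟩
  obtain ⟨w, hw, hpw⟩ := exists_mem_ang_snd_le_of_thin p' hp' hpn' _ p.end_mem_support
    (fun u => p.reachable_of_mem_support) hthin
  rw [ang_comm]
  exact (ang_snd_le_of_mem_support (p'.adj_snd (Walk.not_nil_iff_lt_length.mpr hpn')) p hp hw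
    hpw).trans (by norm_cast; omega)

theorem ang_snd_snd_le_ang_getVert_add {y z : V} {δ : ℕ} (hhyp : HypGraph G δ)
    (p : G.Walk x y) (q : G.Walk x z) (hp : p.length = G.dist x y) (hq : q.length = G.dist x z)
    (hpn : 0 < p.length) (hqn : 0 < q.length) (r : G.Walk y z) (hr : r.length = G.dist y z)
    {i : ℕ} (hi : i ≤ r.length) (hix : r.getVert i = x) :
    ang G x (p.getVert 1) (q.getVert 1) ≤
      ang G x (r.getVert (i - 1)) (r.getVert (i + 1)) + (12 * δ : ℕ) := by
  set r₁ : G.Walk x y := ((r.take i).copy rfl hix).reverse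
  set r₂ : G.Walk x z := (r.drop i).copy hix rfl
  have hr₁ : r₁.length = G.dist x y := by
    simp only [r₁, Walk.length_reverse, Walk.length_copy, Walk.take_length]
    rw [dist_comm, ← hix, r.dist_start_getVert hr hi]
    omega
  have hr₂ : r₂.length = G.dist x z := by
    simp only [r₂, Walk.length_copy, Walk.drop_length]
    rw [← hix, r.dist_getVert_end hr hi]
  have h₁ : r₁.getVert 1 = r.getVert (i - 1) := by simp [r₁, Walk.getVert_reverse, hi]
  have h₂ : r₂.getVert 1 = r.getVert (i + 1) := by simp [r₂]
  calc ang G x (p.getVert 1) (q.getVert 1)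
      ≤ ang G x (p.getVert 1) (r₁.getVert 1) +
          (ang G x (r₁.getVert 1) (r₂.getVert 1) + ang G x (r₂.getVert 1) (q.getVert 1)) :=
        ang_triangle.trans (add_le_add le_rfl ang_triangle)
    _ ≤ (6 * δ : ℕ) + (ang G x (r₁.getVert 1) (r₂.getVert 1) + (6 * δ : ℕ)) := by
        gcongr
        · exact ang_snd_snd_le_of_length_eq_dist hhyp p r₁ hp hr₁ hpn
        · rw [ang_comm]; exact ang_snd_snd_le_of_length_eq_dist hhyp q r₂ hq hr₂ hqn
    _ = ang G x (r.getVert (i - 1)) (r.getVert (i + 1)) + (12 * δ : ℕ) := by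
        rw [h₁, h₂]; push_cast; ring

end SimpleGraph

open SimpleGraph

/-- Large angles in triangles: if two geodesics `[x,y]`, `[x,z]` make an angle at least
`50δ` at `x`, then their concatenation is a geodesic, every geodesic `[y,z]` passes
through `x`, and its angle at `x` is at least the original angle minus `50δ`. -/
theorem stmt6 {V : Type*} (G : SimpleGraph V) (δ : ℕ) (hδ : 0 < δ)
    (hhyp : HypGraph G δ) {x y z : V} (p : G.Walk x y) (q : G.Walk x z)
    (hp : p.length = G.dist x y) (hq : q.length = G.dist x z)
    (hpn : 0 < p.length) (hqn : 0 < q.length)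
    (hang : ((50 * δ : ℕ) : ℕ∞) ≤ ang G x (p.getVert 1) (q.getVert 1)) :
    (p.reverse.append q).length = G.dist y z ∧
    ∀ r : G.Walk y z, r.length = G.dist y z →
      x ∈ r.support ∧
      ∀ i, 0 < i → i < r.length → r.getVert i = x →
        ang G x (p.getVert 1) (q.getVert 1) - ((50 * δ : ℕ) : ℕ∞) ≤
          ang G x (r.getVert (i - 1)) (r.getVert (i + 1)) := by
  have hlt : ((12 * δ + 2 : ℕ) : ℕ∞) < ang G x (p.getVert 1) (q.getVert 1) :=
    lt_of_lt_of_le (by norm_cast; omega) hang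
  have hx (r : G.Walk y z) (hr : r.length = G.dist y z) : x ∈ r.support :=
    mem_support_of_lt_ang hhyp p q hp hq hpn hqn hlt r hr
  refine ⟨?_, fun r hr => ⟨hx r hr, fun i _ hi hix => ?_⟩⟩
  · obtain ⟨r, hr⟩ := (p.reverse.append q).reachable.exists_walk_length_eq_dist
    obtain ⟨i, hix, -⟩ := Walk.mem_support_iff_exists_getVert.mp (hx r hr)
    have := r.dist_start_getVert_add_dist_getVert_end hr i
    rw [hix, dist_comm, ← hp, ← hq, hr] at this
    simp [this]
  · rw [tsub_le_iff_right]
    refine (ang_snd_snd_le_ang_getVert_add hhyp p q hp hq hpn hqn r hr hi.le hix).trans ?_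
    gcongr
    omega
end

section
/- Let K be a fine, δ-hyperbolic graph without global cut point. For every point ξ in the Gromov boundary ∂K and every vertex v of K, there exists a geodesic ray from v converging to ξ. -/
/-- A geodesic ray in a graph: consecutive vertices are adjacent and the
parametrisation is isometric. -/
def GeodRay {V : Type*} (G : SimpleGraph V) (ρ : ℕ → V) : Prop :=
  (∀ k, G.Adj (ρ k) (ρ (k + 1))) ∧ ∀ m n : ℕ, m ≤ n → G.dist (ρ m) (ρ n) = n - m

/-- Twice the Gromov product `(x·y)_o`. -/
noncomputable def gp2 {V : Type*} (G : SimpleGraph V) (o x y : V) : ℤ :=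
  (G.dist o x : ℤ) + G.dist o y - G.dist x y

/-- A sequence of vertices converges to a point of the Gromov boundary if its Gromov
products tend to infinity. -/
def ConvInf {V : Type*} (G : SimpleGraph V) (o : V) (u : ℕ → V) : Prop :=
  ∀ N : ℤ, ∃ M : ℕ, ∀ i j, M ≤ i → M ≤ j → N ≤ gp2 G o (u i) (u j)

/-- Two sequences converge to the same boundary point: mixed Gromov products tend to
infinity. -/
def SameBdry {V : Type*} (G : SimpleGraph V) (o : V) (u w : ℕ → V) : Prop :=
  ∀ N : ℤ, ∃ M : ℕ, ∀ i j, M ≤ i → M ≤ j → N ≤ gp2 G o (u i) (w j)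

/-!
Choose geodesics `γ i` from `v` to `u i`. If two of them agree up to step `n` and have large
Gromov product, thinness of triangles joins their vertices at step `n + 1` by a walk of length
`≤ 4δ` avoiding the vertex at step `n`; this closes up a circuit of bounded length through a
fixed edge, so by fineness only finitely many vertices occur at step `n + 1`. Along a
non-principal ultrafilter the vertices `(γ i).getVert n` therefore stabilise for every `n`,
which defines a geodesic ray `ρ` from `v`, and thinness again shows `(ρ n · u j)_v → ∞`.
-/

namespace SimpleGraph.Walk

variable {V : Type*} {G : SimpleGraph V} {u w : V}

lemma dist_getVert_of_length_eq_dist {p : G.Walk u w} (hp : p.length = G.dist u w) {t : ℕ}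
    (ht : t ≤ p.length) : G.dist u (p.getVert t) = t := by
  have h := length_eq_dist_of_subwalk hp (p.isSubwalk_take t)
  rwa [take_length, min_eq_left ht, eq_comm] at h

lemma dist_getVert_getVert_of_length_eq_dist {p : G.Walk u w} (hp : p.length = G.dist u w)
    {s t : ℕ} (hst : s ≤ t) (ht : t ≤ p.length) :
    G.dist (p.getVert s) (p.getVert t) = t - s := by
  have hd := length_eq_dist_of_subwalk hp (p.isSubwalk_drop s)
  have h := dist_getVert_of_length_eq_dist hd (t := t - s) (by rw [drop_length]; omega)
  rwa [drop_getVert, Nat.add_sub_cancel' hst] at h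

lemma le_dist_of_mem_support_drop {p : G.Walk u w} (hp : p.length = G.dist u w) {k : ℕ}
    (hk : k ≤ p.length) {z : V} (hz : z ∈ (p.drop k).support) : k ≤ G.dist u z := by
  obtain ⟨j, rfl, hj⟩ := mem_support_iff_exists_getVert.mp hz
  rw [drop_length] at hj
  rw [drop_getVert, dist_getVert_of_length_eq_dist hp (by omega)]
  omega

lemma dist_le_length_of_mem_support (p : G.Walk u w) {z : V} (hz : z ∈ p.support) :
    G.dist u z ≤ p.length := by
  classical
  exact (dist_le (p.takeUntil z hz)).trans (p.length_takeUntil_le_length hz)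

end SimpleGraph.Walk

open SimpleGraph Walk Filter

section

variable {V : Type*} {G : SimpleGraph V} {δ : ℕ}

lemma gp2_self (o x : V) : gp2 G o x x = 2 * G.dist o x := by
  simp only [gp2, dist_self, Nat.cast_zero, sub_zero]
  ring

lemma ConvInf.eventually_le_dist {o : V} {u : ℕ → V} (hu : ConvInf G o u) (n : ℕ) :
    ∀ᶠ i in atTop, n ≤ G.dist o (u i) := by
  obtain ⟨M, hM⟩ := hu (2 * n)
  filter_upwards [eventually_ge_atTop M] with i hi
  have h := hM i i hi hi
  rw [gp2_self] at h
  omega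

/-- Each such `y ≠ b` is the third vertex of a circuit of length `≤ L + 2` through `bx`. -/
lemma Fine.finite_setOf_adj_walk_notMem_support (hfine : Fine G) {b x : V} (hbx : G.Adj b x)
    (L : ℕ) : {y | G.Adj x y ∧ ∃ p : G.Walk y b, p.length ≤ L ∧ x ∉ p.support}.Finite := by
  classical
  refine (((hfine (L + 2) b x hbx).image fun c => c.getVert 2).insert b).subset ?_
  rintro y ⟨hxy, p, hpL, hxp⟩
  by_cases hyb : y = b
  · exact .inl hyb
  have hx : x ∉ p.bypass.support := fun h => hxp (p.support_bypass_subset_support h)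
  have hcyc : (cons hbx (cons hxy p.bypass)).IsCycle := by
    refine (cons_isCycle_iff _ hbx).mpr ⟨p.bypass_isPath.cons hx, ?_⟩
    rw [edges_cons, List.mem_cons, not_or]
    refine ⟨fun h => ?_, fun h => hx (p.bypass.snd_mem_support_of_mem_edges h)⟩
    rcases Sym2.eq_iff.mp h with ⟨h1, -⟩ | ⟨h1, -⟩
    · exact hbx.ne h1
    · exact hyb h1.symm
  have hlen : (cons hbx (cons hxy p.bypass)).length ≤ L + 2 := by
    have := p.length_bypass_le_length
    simp only [length_cons]
    omega
  exact .inr ⟨_, ⟨hcyc, by simp, hlen⟩, by simp⟩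

/-- As `(a·b)_v` is large, the point at parameter `ν` of `[v, a]` cannot be `δ`-close to a
geodesic `[b, a]`; thinness of the triangle then puts it `δ`-close to `[v, b]`. -/
lemma HypGraph.exists_dist_getVert_le (hcon : G.Connected) (hhyp : HypGraph G δ) {v a b : V}
    {p : G.Walk v a} {q : G.Walk v b} (hp : p.length = G.dist v a)
    (hq : q.length = G.dist v b) {ν : ℕ} (hν : ν ≤ p.length)
    (hgp : 2 * ((ν : ℤ) + δ + 1) ≤ gp2 G v a b) :
    ∃ m ≤ q.length, G.dist (p.getVert ν) (q.getVert m) ≤ δ ∧ ν ≤ m + δ ∧ m ≤ ν + δ := by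
  obtain ⟨r, hr⟩ := hcon.exists_walk_length_eq_dist b a
  have hpν : G.dist v (p.getVert ν) = ν := dist_getVert_of_length_eq_dist hp hν
  obtain ⟨z, hz, hdz⟩ :=
    hhyp q r p hq hr hp _ (mem_support_iff_exists_getVert.mpr ⟨ν, rfl, hν⟩)
  have t1 := hcon.dist_triangle (u := v) (v := p.getVert ν) (w := z)
  have t2 := hcon.dist_triangle (u := v) (v := z) (w := p.getVert ν)
  rw [dist_comm (u := z)] at t2
  rcases hz with hz | hz
  · obtain ⟨m, rfl, hm⟩ := mem_support_iff_exists_getVert.mp hz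
    have hqm := dist_getVert_of_length_eq_dist hq hm
    exact ⟨m, hm, hdz, by omega, by omega⟩
  · exfalso
    obtain ⟨t, rfl, ht⟩ := mem_support_iff_exists_getVert.mp hz
    have hbz := dist_getVert_of_length_eq_dist hr ht
    have hza := dist_getVert_getVert_of_length_eq_dist hr ht le_rfl
    rw [getVert_length] at hza
    have t3 := hcon.dist_triangle (u := v) (v := r.getVert t) (w := a)
    have t4 := hcon.dist_triangle (u := v) (v := r.getVert t) (w := b)
    rw [dist_comm (u := r.getVert t) (v := b)] at t4
    have hab : G.dist a b = G.dist b a := dist_comm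
    unfold gp2 at hgp
    omega

/-- Follow `p` for `δ` more steps, jump across to `q`, and come back along `q`. -/
lemma HypGraph.exists_walk_getVert_getVert (hcon : G.Connected) (hhyp : HypGraph G δ)
    {v a b : V} {p : G.Walk v a} {q : G.Walk v b} (hp : p.length = G.dist v a)
    (hq : q.length = G.dist v b) {k : ℕ} (hk : k + δ ≤ p.length)
    (hgp : 2 * ((k : ℤ) + 2 * δ + 1) ≤ gp2 G v a b) :
    ∃ w : G.Walk (p.getVert k) (q.getVert k), w.length ≤ 4 * δ ∧
      ∀ z ∈ w.support, k ≤ G.dist v z := by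
  obtain ⟨m, hm, hdist, hkm, hmk⟩ :=
    hhyp.exists_dist_getVert_le hcon hp hq hk (by push_cast; linarith)
  obtain ⟨c, hc⟩ := hcon.exists_walk_length_eq_dist (p.getVert (k + δ)) (q.getVert m)
  let w₁ := ((p.drop k).take δ).copy rfl (drop_getVert ..)
  let w₂ := ((q.drop k).take (m - k)).copy rfl
    (by rw [drop_getVert, Nat.add_sub_cancel' (by omega)])
  refine ⟨w₁.append (c.append w₂.reverse), ?_, ?_⟩
  · have := (p.drop k).take_length δ
    have := (q.drop k).take_length (m - k)
    simp only [w₁, w₂, length_append, length_copy, length_reverse]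
    omega
  · intro z hz
    simp only [w₁, w₂, mem_support_append_iff, support_copy, support_reverse,
      List.mem_reverse] at hz
    rcases hz with hz | hz | hz
    · exact le_dist_of_mem_support_drop hp (by omega) ((isSubwalk_take ..).support_subset hz)
    · have hcz := c.dist_le_length_of_mem_support hz
      have hpk := dist_getVert_of_length_eq_dist hp hk
      have := hcon.dist_triangle (u := v) (v := z) (w := p.getVert (k + δ))
      rw [dist_comm (u := z)] at this
      omega
    · exact le_dist_of_mem_support_drop hq (by omega) ((isSubwalk_take ..).support_subset hz)

lemma HypGraph.le_gp2_getVert (hcon : G.Connected) (hhyp : HypGraph G δ) {v a b : V}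
    {p : G.Walk v a} {q : G.Walk v b} (hp : p.length = G.dist v a)
    (hq : q.length = G.dist v b) {ν n : ℕ} (hνn : ν ≤ n) (hn : n ≤ p.length)
    (hgp : 2 * ((ν : ℤ) + δ + 1) ≤ gp2 G v a b) :
    2 * ((ν : ℤ) - δ) ≤ gp2 G v (p.getVert n) b := by
  obtain ⟨m, hm, hdist, hνm, -⟩ := hhyp.exists_dist_getVert_le hcon hp hq (hνn.trans hn) hgp
  have hpn := dist_getVert_of_length_eq_dist hp hn
  have hpνn := dist_getVert_getVert_of_length_eq_dist hp hνn hn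
  have hqm := dist_getVert_getVert_of_length_eq_dist hq hm le_rfl
  rw [getVert_length] at hqm
  have t1 := hcon.dist_triangle (u := p.getVert n) (v := p.getVert ν) (w := b)
  have t2 := hcon.dist_triangle (u := p.getVert ν) (v := q.getVert m) (w := b)
  rw [dist_comm (u := p.getVert n) (v := p.getVert ν)] at t1
  unfold gp2
  omega

lemma finite_image_getVert_succ (hcon : G.Connected) (hfine : Fine G) (hhyp : HypGraph G δ)
    {ι : Type*} {v : V} {u : ι → V} {γ : ∀ i, G.Walk v (u i)}
    (hγ : ∀ i, (γ i).length = G.dist v (u i)) {T : Set ι} {n : ℕ} {x : V}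
    (hx : ∀ i ∈ T, (γ i).getVert n = x)
    (hgp : ∀ i ∈ T, ∀ j ∈ T, 2 * ((n : ℤ) + 2 * δ + 2) ≤ gp2 G v (u i) (u j)) :
    ((fun i => (γ i).getVert (n + 1)) '' T).Finite := by
  rcases T.eq_empty_or_nonempty with rfl | ⟨i₀, hi₀⟩
  · simp
  have hlen : ∀ i ∈ T, n + 2 * δ + 2 ≤ (γ i).length := by
    intro i hi
    have h := hgp i hi i hi
    rw [gp2_self, ← hγ i] at h
    omega
  have hbx : G.Adj ((γ i₀).getVert (n + 1)) x := by
    rw [← hx i₀ hi₀]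
    exact ((γ i₀).adj_getVert_succ (by linarith [hlen i₀ hi₀])).symm
  refine (hfine.finite_setOf_adj_walk_notMem_support hbx (4 * δ)).subset ?_
  rintro _ ⟨i, hi, rfl⟩
  have hxi : G.Adj x ((γ i).getVert (n + 1)) := by
    rw [← hx i hi]
    exact (γ i).adj_getVert_succ (by linarith [hlen i hi])
  obtain ⟨w, hw, hfar⟩ := hhyp.exists_walk_getVert_getVert hcon (hγ i) (hγ i₀) (k := n + 1)
    (by linarith [hlen i hi]) (by push_cast; linarith [hgp i hi i₀ hi₀])
  refine ⟨hxi, w, hw, fun hxw => ?_⟩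
  have h := hfar x hxw
  rw [← hx i₀ hi₀, dist_getVert_of_length_eq_dist (hγ i₀) (by linarith [hlen i₀ hi₀])] at h
  omega

lemma exists_eventually_getVert_eq (hcon : G.Connected) (hfine : Fine G)
    (hhyp : HypGraph G δ) {U : Ultrafilter ℕ} (hU : (U : Filter ℕ) ≤ atTop) {v : V} {u : ℕ → V}
    {γ : ∀ i, G.Walk v (u i)} (hγ : ∀ i, (γ i).length = G.dist v (u i))
    (hu : ConvInf G v u) (n : ℕ) : ∃ x, ∀ᶠ i in U, (γ i).getVert n = x := by
  induction n with
  | zero => exact ⟨v, .of_forall fun i => (γ i).getVert_zero⟩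
  | succ n ih =>
    obtain ⟨x, hx⟩ := ih
    obtain ⟨M, hM⟩ := hu (2 * ((n : ℤ) + 2 * δ + 2))
    let T := {i | (γ i).getVert n = x ∧ M ≤ i}
    have hT : T ∈ U := hx.and ((eventually_ge_atTop M).filter_mono hU)
    have hfin := finite_image_getVert_succ hcon hfine hhyp hγ (T := T) (fun i hi => hi.1)
      (fun i hi j hj => hM i j hi.2 hj.2)
    have hev : ∀ᶠ i in U, ∃ y ∈ (fun i => (γ i).getVert (n + 1)) '' T,
        (γ i).getVert (n + 1) = y :=
      mem_of_superset hT fun i hi => ⟨_, ⟨i, hi, rfl⟩, rfl⟩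
    obtain ⟨y, -, hy⟩ := (Ultrafilter.eventually_exists_mem_iff hfin).mp hev
    exact ⟨y, hy⟩

lemma geodRay_of_eventually_getVert_eq {ι : Type*} {l : Filter ι} [l.NeBot] {v : V}
    {u : ι → V} {γ : ∀ i, G.Walk v (u i)} (hγ : ∀ i, (γ i).length = G.dist v (u i))
    (hlen : ∀ n, ∀ᶠ i in l, n ≤ (γ i).length) {ρ : ℕ → V}
    (hρ : ∀ n, ∀ᶠ i in l, (γ i).getVert n = ρ n) : GeodRay G ρ ∧ ρ 0 = v := by
  have key (n : ℕ) : ∃ i, n ≤ (γ i).length ∧ ∀ k ∈ Set.Iic n, (γ i).getVert k = ρ k :=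
    ((hlen n).and ((eventually_all_finite (Set.finite_Iic n)).mpr fun k _ => hρ k)).exists
  refine ⟨⟨fun k => ?_, fun m n hmn => ?_⟩, ?_⟩
  · obtain ⟨i, hi, hρi⟩ := key (k + 1)
    rw [← hρi k (by simp), ← hρi (k + 1) Set.self_mem_Iic]
    exact (γ i).adj_getVert_succ (by omega)
  · obtain ⟨i, hi, hρi⟩ := key n
    rw [← hρi m (Set.mem_Iic.mpr hmn), ← hρi n Set.self_mem_Iic]
    exact dist_getVert_getVert_of_length_eq_dist (hγ i) hmn hi
  · obtain ⟨i, -, hρi⟩ := key 0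
    rw [← hρi 0 Set.self_mem_Iic, getVert_zero]

lemma sameBdry_of_eventually_getVert_eq (hcon : G.Connected) (hhyp : HypGraph G δ)
    {l : Filter ℕ} [l.NeBot] (hl : l ≤ atTop) {v : V} {u : ℕ → V}
    {γ : ∀ i, G.Walk v (u i)} (hγ : ∀ i, (γ i).length = G.dist v (u i))
    (hu : ConvInf G v u) {ρ : ℕ → V} (hρ : ∀ n, ∀ᶠ i in l, (γ i).getVert n = ρ n) :
    SameBdry G v ρ u := by
  intro N
  obtain ⟨M, hM⟩ := hu (2 * (((N.toNat + δ : ℕ) : ℤ) + δ + 1))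
  refine ⟨max M (N.toNat + δ), fun n j hn hj => ?_⟩
  obtain ⟨i, hiM, hin, hρi⟩ :=
    (((eventually_ge_atTop M).filter_mono hl).and
      (((hu.eventually_le_dist n).filter_mono hl).and (hρ n))).exists
  have h := hhyp.le_gp2_getVert hcon (hγ i) (hγ j) (n := n) (by omega) (hγ i ▸ hin)
    (hM i j hiM (by omega))
  rw [hρi] at h
  omega

end

theorem stmt7_general {V : Type*} (G : SimpleGraph V) (δ : ℕ) (hcon : G.Connected)
    (hfine : Fine G) (hhyp : HypGraph G δ)
    (v : V) (u : ℕ → V) (hu : ConvInf G v u) :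
    ∃ ρ : ℕ → V, GeodRay G ρ ∧ ρ 0 = v ∧ SameBdry G v ρ u := by
  choose γ hγ using fun i => hcon.exists_walk_length_eq_dist v (u i)
  have hU := Nat.hyperfilter_le_atTop
  choose ρ hρ using exists_eventually_getVert_eq hcon hfine hhyp hU hγ hu
  have hlen (n : ℕ) : ∀ᶠ i in Filter.hyperfilter ℕ, n ≤ (γ i).length :=
    ((hu.eventually_le_dist n).filter_mono hU).mono fun i hi => (hγ i).symm ▸ hi
  obtain ⟨hray, hρ0⟩ := geodRay_of_eventually_getVert_eq hγ hlen hρ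
  exact ⟨ρ, hray, hρ0, sameBdry_of_eventually_getVert_eq hcon hhyp hU hγ hu hρ⟩

/-- Visibility: in a fine hyperbolic connected graph without global cut point, every
boundary point is the limit of a geodesic ray from any given vertex. -/
theorem stmt7 {V : Type*} (G : SimpleGraph V) (δ : ℕ) (hcon : G.Connected)
    (hfine : Fine G) (hhyp : HypGraph G δ)
    (hnocut : ∀ v : V, (SimpleGraph.induce {u : V | u ≠ v} G).Connected)
    (v : V) (u : ℕ → V) (hu : ConvInf G v u) :
    ∃ ρ : ℕ → V, GeodRay G ρ ∧ ρ 0 = v ∧ SameBdry G v ρ u :=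
  stmt7_general G δ hcon hfine hhyp v u hu
end

section
/- Let K be a fine, δ-hyperbolic graph without global cut point. For every pair of distinct points ξ, ξ' in the Gromov boundary ∂K, there exists a bi-infinite geodesic in K with endpoints ξ and ξ'. -/
namespace Stmt8Aux
open SimpleGraph Walk
variable {V : Type*} {G : SimpleGraph V} [DecidableEq V] {x y v w o : V}

lemma getVert_mem_support (p : G.Walk x y) {i : ℕ} (h : i ≤ p.length) : p.getVert i ∈ p.support := by
  rw [Walk.mem_support_iff_exists_getVert]; exact ⟨i, rfl, h⟩

lemma dist_getVert_le (hc : G.Connected) (p : G.Walk x y) (i k : ℕ) :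
    G.dist (p.getVert i) (p.getVert (i + k)) ≤ k := by
  induction k with
  | zero => simp [SimpleGraph.dist_self]
  | succ k ih =>
    have h2 : G.dist (p.getVert (i+k)) (p.getVert (i+(k+1))) ≤ 1 := by
      by_cases hl : i + k < p.length
      · exact le_of_eq (SimpleGraph.dist_eq_one_iff_adj.mpr (p.adj_getVert_succ hl))
      · push_neg at hl
        have e1 := p.getVert_of_length_le hl
        have e2 := p.getVert_of_length_le (i := i + (k+1)) (by omega)
        rw [show i + (k+1) = i + k + 1 by omega] at *
        rw [e1, e2]; simp [SimpleGraph.dist_self]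
    calc G.dist (p.getVert i) (p.getVert (i+(k+1)))
        ≤ G.dist (p.getVert i) (p.getVert (i+k)) + G.dist (p.getVert (i+k)) (p.getVert (i+(k+1))) :=
          hc.dist_triangle (v := p.getVert (i+k))
      _ ≤ k + 1 := by
          have := ih
          omega

lemma dist_start_le (p : G.Walk x y) (h : v ∈ p.support) : G.dist x v ≤ p.length :=
  le_trans (SimpleGraph.dist_le (p.takeUntil v h)) (p.length_takeUntil_le h)

lemma dist_end_le (p : G.Walk x y) (h : v ∈ p.support) : G.dist v y ≤ p.length :=
  le_trans (SimpleGraph.dist_le (p.dropUntil v h)) (p.length_dropUntil_le h)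

lemma geo_split (p : G.Walk x y) (hp : p.length = G.dist x y) (hc : G.Connected) (h : v ∈ p.support) :
    (p.takeUntil v h).length = G.dist x v ∧ (p.dropUntil v h).length = G.dist v y := by
  have hadd : (p.takeUntil v h).length + (p.dropUntil v h).length = p.length := by
    rw [← Walk.length_append, p.take_spec h]
  have h1 : G.dist x v ≤ (p.takeUntil v h).length := SimpleGraph.dist_le _
  have h2 : G.dist v y ≤ (p.dropUntil v h).length := SimpleGraph.dist_le _
  have h3 : G.dist x y ≤ G.dist x v + G.dist v y := hc.dist_triangle
  omega

lemma geo_point_split (p : G.Walk x y) (hp : p.length = G.dist x y) (hc : G.Connected)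
    (h : v ∈ p.support) : G.dist x v + G.dist v y = G.dist x y := by
  obtain ⟨h1, h2⟩ := geo_split p hp hc h
  have hadd : (p.takeUntil v h).length + (p.dropUntil v h).length = p.length := by
    rw [← Walk.length_append, p.take_spec h]
  omega

lemma geo_dist_getVert (p : G.Walk x y) (hp : p.length = G.dist x y) (hc : G.Connected)
    {i j : ℕ} (hij : i ≤ j) (hj : j ≤ p.length) :
    G.dist (p.getVert i) (p.getVert j) = j - i := by
  have hub : G.dist (p.getVert i) (p.getVert j) ≤ j - i := by
    have := dist_getVert_le hc p i (j - i)
    rwa [show i + (j - i) = j by omega] at this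
  have h1 : G.dist x (p.getVert i) ≤ i := by
    have := dist_getVert_le hc p 0 i
    rwa [p.getVert_zero, Nat.zero_add] at this
  have h2 : G.dist (p.getVert j) y ≤ p.length - j := by
    have := dist_getVert_le hc p j (p.length - j)
    rwa [show j + (p.length - j) = p.length by omega, p.getVert_length] at this
  have h3 : G.dist x y ≤ G.dist x (p.getVert i) + G.dist (p.getVert i) (p.getVert j)
      + G.dist (p.getVert j) y := by
    have t1 : G.dist x y ≤ G.dist x (p.getVert j) + G.dist (p.getVert j) y :=
      hc.dist_triangle (v := p.getVert j)
    have t2 : G.dist x (p.getVert j) ≤ G.dist x (p.getVert i) + G.dist (p.getVert i) (p.getVert j) :=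
      hc.dist_triangle (v := p.getVert i)
    omega
  omega

/-- append of two paths meeting only at the junction is a path -/
lemma isPath_append {p : G.Walk x v} {q : G.Walk v y} (hp : p.IsPath) (hq : q.IsPath)
    (hint : ∀ u, u ∈ p.support → u ∈ q.support → u = v) : (p.append q).IsPath := by
  rw [Walk.isPath_def, Walk.support_append]
  apply List.Nodup.append hp.support_nodup
  · have : q.support = v :: q.support.tail := q.support_eq_cons
    exact (List.nodup_cons.mp (this ▸ hq.support_nodup)).2
  · intro a ha hat
    have haq : a ∈ q.support := by
      rw [q.support_eq_cons]; exact List.mem_cons_of_mem _ hat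
    have := hint a ha haq
    subst this
    have : q.support = a :: q.support.tail := q.support_eq_cons
    exact (List.nodup_cons.mp (this ▸ hq.support_nodup)).1 hat

/-- first-intersection trim -/
lemma trim_first (c : G.Walk x v) (S : Set V) (hv : v ∈ S) (hc : c.IsPath) :
    ∃ (w : V) (c' : G.Walk x w), c'.IsPath ∧ c'.length ≤ c.length ∧
      (∀ u ∈ c'.support, u ∈ c.support) ∧ w ∈ S ∧ (∀ u ∈ c'.support, u ∈ S → u = w) := by
  induction c with
  | nil =>
    refine ⟨_, Walk.nil, Walk.IsPath.nil, le_refl _, fun u hu => hu, hv, ?_⟩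
    intro u hu _
    simpa using hu
  | @cons a b vv h p ih =>
    by_cases haS : a ∈ S
    · refine ⟨a, Walk.nil, Walk.IsPath.nil, by simp, ?_, haS, ?_⟩
      · intro u hu; simp at hu; simp [hu]
      · intro u hu _; simpa using hu
    · obtain ⟨w, c'', hpath, hlen, hsub, hwS, hfirst⟩ := ih hv hc.of_cons
      refine ⟨w, Walk.cons h c'', ?_, ?_, ?_, hwS, ?_⟩
      · rw [Walk.cons_isPath_iff]
        refine ⟨hpath, fun hmem => ?_⟩
        exact ((Walk.cons_isPath_iff h p).mp hc).2 (hsub a hmem)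
      · simp only [Walk.length_cons]; omega
      · intro u hu
        simp only [Walk.support_cons, List.mem_cons] at hu ⊢
        rcases hu with h1 | h2
        · exact Or.inl h1
        · exact Or.inr (hsub u h2)
      · intro u hu huS
        simp only [Walk.support_cons, List.mem_cons] at hu
        rcases hu with h1 | h2
        · exact absurd (h1 ▸ huS) haS
        · exact hfirst u h2 huS

/-- In a fine graph, the set of vertices lying on arcs of length ≤ L between two
fixed vertices is finite. -/
lemma fine_arcs (hfine : Fine G) :
    ∀ (L : ℕ) (x y : V),
      {v : V | ∃ p : G.Walk x y, p.IsPath ∧ p.length ≤ L ∧ v ∈ p.support}.Finite := by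
  intro L
  induction L with
  | zero =>
    intro x y
    apply Set.Finite.subset (Set.finite_singleton x)
    rintro v ⟨p, hp, hlen, hv⟩
    cases p with
    | nil => simpa using hv
    | cons h q => simp [Walk.length_cons] at hlen
  | succ L ih =>
    intro x y
    by_cases hxy : x = y
    · subst hxy
      apply Set.Finite.subset (Set.finite_singleton x)
      rintro v ⟨p, hp, hlen, hv⟩
      rw [Walk.isPath_iff_eq_nil] at hp
      subst hp
      simpa using hv
    · by_cases hex : ∃ p : G.Walk x y, p.IsPath ∧ p.length ≤ L + 1
      · obtain ⟨α, hα, hαlen⟩ := hex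
        -- α = cons h₀ q₀ with h₀ : G.Adj x w₀
        cases α with
        | nil => exact absurd rfl hxy
        | @cons _ w₀ _ h₀ q₀ =>
          have hq₀ : q₀.IsPath := hα.of_cons
          have hxq₀ : x ∉ q₀.support := ((Walk.cons_isPath_iff h₀ q₀).mp hα).2
          have hq₀len : q₀.length ≤ L := by
            simp only [Walk.length_cons] at hαlen; omega
          -- the finite set of cycles through edge s(x,w₀)
          have hcyc := hfine (2*L+4) x w₀ h₀
          -- candidate set of second vertices
          set Zset : Set V :=
            {w₀} ∪ ⋃ c ∈ {p : G.Walk x x | p.IsCycle ∧ s(x, w₀) ∈ p.edges ∧ p.length ≤ 2*L+4},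
              {v : V | v ∈ c.support} with hZdef
          have hZfin : Zset.Finite := by
            apply Set.Finite.union (Set.finite_singleton w₀)
            apply Set.Finite.biUnion hcyc
            intro c _
            exact (c.support : List V).finite_toSet
          -- key claim: second vertices of arcs lie in Zset
          have key : ∀ z : V, G.Adj x z →
              (∃ β' : G.Walk z y, β'.IsPath ∧ x ∉ β'.support ∧ β'.length ≤ L) → z ∈ Zset := by
            intro z hadj ⟨β', hβ', hxβ', hβ'len⟩
            by_cases hzw : z = w₀
            · exact Or.inl hzw
            · -- build a cycle through s(x, w₀) containing z
              have hQ : (β'.append q₀.reverse).support ⊆ β'.support ++ q₀.support := by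
                intro a ha
                rw [Walk.support_append] at ha
                rcases List.mem_append.mp ha with h1 | h2
                · exact List.mem_append.mpr (Or.inl h1)
                · refine List.mem_append.mpr (Or.inr ?_)
                  have := List.mem_of_mem_tail h2
                  rwa [Walk.support_reverse, List.mem_reverse] at this
              set Q : G.Walk z w₀ := (β'.append q₀.reverse).bypass with hQdef
              have hQpath : Q.IsPath := Walk.bypass_isPath _
              have hQsub : Q.support ⊆ β'.support ++ q₀.support := by
                intro a ha
                exact hQ (Walk.support_bypass_subset _ ha)
              have hxQ : x ∉ Q.support := by
                intro hx
                rcases List.mem_append.mp (hQsub hx) with h1 | h2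
                · exact hxβ' h1
                · exact hxq₀ h2
              have hQlen : Q.length ≤ 2*L + 1 := by
                have h1 : Q.length ≤ (β'.append q₀.reverse).length := Walk.length_bypass_le _
                rw [Walk.length_append, Walk.length_reverse] at h1
                omega
              -- R : walk z → x via w₀
              have hw₀x : G.Adj w₀ x := h₀.symm
              set R : G.Walk z x := Q.append (Walk.cons hw₀x Walk.nil) with hRdef
              have hRpath : R.IsPath := by
                apply isPath_append hQpath
                · rw [Walk.cons_isPath_iff]
                  exact ⟨Walk.IsPath.nil, by simp [h₀.ne']⟩
                · intro a ha hb
                  simp only [Walk.support_cons, Walk.support_nil, List.mem_cons,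
                    List.not_mem_nil, or_false] at hb
                  rcases hb with hb | hb
                  · exact hb
                  · exact absurd (hb ▸ ha) hxQ
              have hsxz : ¬ s(x, z) ∈ R.edges := by
                intro hmem
                rw [Walk.edges_append] at hmem
                rcases List.mem_append.mp hmem with h1 | h2
                · exact hxQ (Walk.fst_mem_support_of_mem_edges Q h1)
                · simp only [Walk.edges_cons, Walk.edges_nil, List.mem_singleton] at h2
                  rw [Sym2.eq_iff] at h2
                  rcases h2 with ⟨hx1, hx2⟩ | ⟨hx1, hx2⟩
                  · exact h₀.ne hx1
                  · exact hzw hx2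
              set C : G.Walk x x := Walk.cons hadj R with hCdef
              have hCcyc : C.IsCycle := (Walk.cons_isCycle_iff R hadj).mpr ⟨hRpath, hsxz⟩
              have hCedge : s(x, w₀) ∈ C.edges := by
                rw [hCdef, Walk.edges_cons, hRdef, Walk.edges_append]
                refine List.mem_cons_of_mem _ (List.mem_append.mpr (Or.inr ?_))
                simp [Sym2.eq_swap]
              have hClen : C.length ≤ 2*L + 4 := by
                rw [hCdef, Walk.length_cons, hRdef, Walk.length_append]
                simp only [Walk.length_cons, Walk.length_nil]
                omega
              have hzC : z ∈ C.support := by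
                rw [hCdef, Walk.support_cons]
                refine List.mem_cons_of_mem _ ?_
                rw [hRdef, Walk.support_append]
                exact List.mem_append.mpr (Or.inl Q.start_mem_support)
              exact Or.inr (Set.mem_biUnion ⟨hCcyc, hCedge, hClen⟩ hzC)
          -- now bound the main set
          apply Set.Finite.subset
            (Set.Finite.union (Set.finite_singleton x)
              (Set.Finite.biUnion hZfin (fun z _ => ih z y)))
          rintro v ⟨p, hp, hplen, hv⟩
          cases p with
          | nil => exact absurd rfl hxy
          | @cons _ z _ hadj p' =>
            rcases (List.mem_cons).mp (by simpa [Walk.support_cons] using hv) with h1 | h2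
            · exact Or.inl (by simp [h1])
            · have hp' : p'.IsPath := hp.of_cons
              have hxp' : x ∉ p'.support := ((Walk.cons_isPath_iff hadj p').mp hp).2
              have hp'len : p'.length ≤ L := by
                simp only [Walk.length_cons] at hplen; omega
              have hz : z ∈ Zset := key z hadj ⟨p', hp', hxp', hp'len⟩
              exact Or.inr (Set.mem_biUnion hz ⟨p', hp', hp'len, h2⟩)
      · apply Set.Finite.subset (Set.finite_empty)
        rintro v ⟨p, hp, hlen, hv⟩
        exact hex ⟨p, hp, hlen⟩


lemma gp2_nonneg (hc : G.Connected) (o x y : V) : 0 ≤ gp2 G o x y := by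
  have h := hc.dist_triangle (u := x) (v := o) (w := y)
  have h1 : G.dist x o = G.dist o x := SimpleGraph.dist_comm
  unfold gp2; push_cast; omega

lemma gp2_comm (o x y : V) : gp2 G o x y = gp2 G o y x := by
  unfold gp2
  have h1 : G.dist x y = G.dist y x := SimpleGraph.dist_comm
  push_cast; omega

lemma gp2_self (o x : V) : gp2 G o x x = 2 * G.dist o x := by
  unfold gp2
  have : G.dist x x = 0 := SimpleGraph.dist_self
  push_cast; omega

/-- any point of a geodesic [y,y'] is at distance at least (y·y')ₒ from o -/
lemma far_from_base (hc : G.Connected) {y y' : V} (q : G.Walk y y')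
    (hq : q.length = G.dist y y') (hw : w ∈ q.support) (o : V) :
    gp2 G o y y' ≤ 2 * G.dist o w := by
  have hsplit := geo_point_split q hq hc hw
  have t1 : G.dist o y ≤ G.dist o w + G.dist w y := by
    have := hc.dist_triangle (u := o) (v := w) (w := y); omega
  have t2 : G.dist o y' ≤ G.dist o w + G.dist w y' := by
    have := hc.dist_triangle (u := o) (v := w) (w := y'); omega
  have c1 : G.dist w y = G.dist y w := SimpleGraph.dist_comm
  unfold gp2; push_cast; omega

/-- some point of a geodesic [x,y] is close to o when the Gromov product is small -/
lemma near_base (hc : G.Connected) (hhyp : HypGraph G δ) (o : V) {x y : V}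
    (r : G.Walk x y) (hr : r.length = G.dist x y) :
    ∃ n ≤ r.length, (G.dist o (r.getVert n) : ℤ) ≤ gp2 G o x y + 2*δ := by
  obtain ⟨p, hp⟩ := hc.exists_walk_length_eq_dist x o
  obtain ⟨q, hq⟩ := hc.exists_walk_length_eq_dist o y
  set s := min (G.dist x o) r.length with hs
  refine ⟨s, min_le_right _ _, ?_⟩
  set w := r.getVert s with hwdef
  obtain ⟨u, hu, hdwu⟩ := hhyp p q r hp hq hr w (getVert_mem_support r (min_le_right _ _))
  have hxw : G.dist x w = s := by
    have := geo_dist_getVert r hr hc (Nat.zero_le s) (min_le_right _ _)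
    rwa [r.getVert_zero, Nat.sub_zero] at this
  have hwy : G.dist w y = r.length - s := by
    have := geo_dist_getVert r hr hc (min_le_right (G.dist x o) r.length) (le_refl r.length)
    rwa [r.getVert_length] at this
  have hnn : G.dist x y ≤ G.dist x o + G.dist o y := hc.dist_triangle
  have cxo : G.dist x o = G.dist o x := SimpleGraph.dist_comm
  have tow : G.dist o w ≤ G.dist o y + G.dist w y := by
    have := hc.dist_triangle (u := o) (v := y) (w := w)
    have cc : G.dist y w = G.dist w y := SimpleGraph.dist_comm
    omega
  rcases hu with hup | huq
  · -- u on [x,o]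
    have hsplit := geo_point_split p hp hc hup
    have t1 : G.dist o w ≤ G.dist o u + G.dist w u := by
      have := hc.dist_triangle (u := o) (v := u) (w := w)
      have cc : G.dist u w = G.dist w u := SimpleGraph.dist_comm
      omega
    have t2 : G.dist x w ≤ G.dist x u + G.dist w u := by
      have := hc.dist_triangle (u := x) (v := u) (w := w)
      have cc : G.dist u w = G.dist w u := SimpleGraph.dist_comm
      omega
    have cuo : G.dist u o = G.dist o u := SimpleGraph.dist_comm
    have hrl : r.length = G.dist x y := hr
    unfold gp2; push_cast; omega
  · -- u on [o,y]
    have hsplit := geo_point_split q hq hc huq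
    have t1 : G.dist o w ≤ G.dist o u + G.dist w u := by
      have := hc.dist_triangle (u := o) (v := u) (w := w)
      have cc : G.dist u w = G.dist w u := SimpleGraph.dist_comm
      omega
    have t2 : G.dist w y ≤ G.dist w u + G.dist u y := by
      have := hc.dist_triangle (u := w) (v := u) (w := y)
      omega
    have hrl : r.length = G.dist x y := hr
    unfold gp2; push_cast; omega

/-- the (doubled) four point inequality with constant 6δ -/
lemma four_point (hc : G.Connected) (hhyp : HypGraph G δ) (o a b c : V) :
    min (gp2 G o a b) (gp2 G o b c) ≤ 2 * gp2 G o a c + 6*δ := by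
  obtain ⟨r, hr⟩ := hc.exists_walk_length_eq_dist a c
  obtain ⟨n, hn, hnear⟩ := near_base hc hhyp o r hr
  set w := r.getVert n with hw
  obtain ⟨p, hp⟩ := hc.exists_walk_length_eq_dist a b
  obtain ⟨q, hq⟩ := hc.exists_walk_length_eq_dist b c
  obtain ⟨u, hu, hdwu⟩ := hhyp p q r hp hq hr w (getVert_mem_support r hn)
  have t1 : G.dist o u ≤ G.dist o w + G.dist w u := hc.dist_triangle
  rcases hu with hup | huq
  · have hfar := far_from_base hc p hp hup o
    have : (G.dist o u : ℤ) ≤ gp2 G o a c + 3*δ := by push_cast at hnear ⊢; omega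
    exact le_trans (min_le_left _ _) (by push_cast at hfar this ⊢; omega)
  · have hfar := far_from_base hc q hq huq o
    have : (G.dist o u : ℤ) ≤ gp2 G o a c + 3*δ := by push_cast at hnear ⊢; omega
    exact le_trans (min_le_right _ _) (by push_cast at hfar this ⊢; omega)

/-- fellow-traveling: points of [x,y] near o are 2δ-close to [x',y'] when the endpoints
have large Gromov products -/
lemma fellow (hc : G.Connected) (hhyp : HypGraph G δ) {x y x' y' : V}
    (g : G.Walk x y) (hg : g.length = G.dist x y)
    (g' : G.Walk x' y') (hg' : g'.length = G.dist x' y')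
    (o v : V) (hv : v ∈ g.support)
    (h1 : 2 * (G.dist o v : ℤ) + 2*δ < gp2 G o y y')
    (h2 : 2 * (G.dist o v : ℤ) + 4*δ < gp2 G o x x') :
    ∃ u ∈ g'.support, G.dist v u ≤ 2*δ := by
  obtain ⟨p1, hp1⟩ := hc.exists_walk_length_eq_dist x y'
  obtain ⟨q1, hq1⟩ := hc.exists_walk_length_eq_dist y' y
  obtain ⟨u₁, hu₁, hd₁⟩ := hhyp p1 q1 g hp1 hq1 hg v hv
  rcases hu₁ with hl | hr'
  · -- u₁ on [x, y']; second triangle x x' y'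
    obtain ⟨p2, hp2⟩ := hc.exists_walk_length_eq_dist x x'
    obtain ⟨u₂, hu₂, hd₂⟩ := hhyp p2 g' p1 hp2 hg' hp1 u₁ hl
    rcases hu₂ with h2l | h2r
    · exfalso
      have hfar := far_from_base hc p2 hp2 h2l o
      have t1 : G.dist o u₂ ≤ G.dist o v + G.dist v u₁ + G.dist u₁ u₂ := by
        have a1 : G.dist o u₂ ≤ G.dist o u₁ + G.dist u₁ u₂ := hc.dist_triangle
        have a2 : G.dist o u₁ ≤ G.dist o v + G.dist v u₁ := hc.dist_triangle
        omega
      push_cast at hfar h2 ⊢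
      omega
    · refine ⟨u₂, h2r, ?_⟩
      calc G.dist v u₂ ≤ G.dist v u₁ + G.dist u₁ u₂ := hc.dist_triangle
        _ ≤ 2*δ := by omega
  · -- u₁ on [y', y]: contradiction with h1
    exfalso
    have hfar := far_from_base hc q1 hq1 hr' o
    have hgpc : gp2 G o y' y = gp2 G o y y' := gp2_comm o y' y
    have t1 : G.dist o u₁ ≤ G.dist o v + G.dist v u₁ := hc.dist_triangle
    push_cast at hfar h1 ⊢
    omega


lemma length_take_add_drop (p : G.Walk x y) (hw : w ∈ p.support) :
    (p.takeUntil w hw).length + (p.dropUntil w hw).length = p.length := by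
  rw [← Walk.length_append, p.take_spec hw]

lemma mem_take_or_drop (p : G.Walk x y) (hw : w ∈ p.support) {u : V} (h : u ∈ p.support) :
    u ∈ (p.takeUntil w hw).support ∨ u ∈ (p.dropUntil w hw).support := by
  have hsp := congrArg Walk.support (p.take_spec hw)
  rw [Walk.support_append] at hsp
  have : u ∈ (p.takeUntil w hw).support ++ (p.dropUntil w hw).support.tail := by
    rw [hsp]; exact h
  rcases List.mem_append.mp this with h1 | h2
  · exact Or.inl h1
  · exact Or.inr (List.mem_of_mem_tail h2)

lemma getVert_takeUntil (p : G.Walk x y) (hw : w ∈ p.support) {i : ℕ}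
    (hi : i ≤ (p.takeUntil w hw).length) : (p.takeUntil w hw).getVert i = p.getVert i := by
  have h1 : p.getVert i = ((p.takeUntil w hw).append (p.dropUntil w hw)).getVert i :=
    congrArg (fun q => Walk.getVert q i) (p.take_spec hw).symm
  rw [Walk.getVert_append] at h1
  rcases Nat.lt_or_ge i (p.takeUntil w hw).length with hlt | hge
  · rw [h1, if_pos hlt]
  · have hieq : i = (p.takeUntil w hw).length := by omega
    rw [h1, if_neg (by omega), hieq, Walk.getVert_length]
    rw [Nat.sub_self, Walk.getVert_zero]

/-- Arc surgery: a middle point of a geodesic, whose window endpoints are connected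
by short paths to fixed vertices `a`, `b`, lies on a path from `a` to `b` of
controlled length. -/
lemma surgery (hc : G.Connected) {x y : V} (g : G.Walk x y) (hg : g.length = G.dist x y)
    {s r D : ℕ} (hrD : 3*D + 1 ≤ r)
    (hs1 : r ≤ s) (hs2 : s + r ≤ g.length)
    {a b : V} (ca : G.Walk a (g.getVert (s - r))) (hca : ca.IsPath) (hcalen : ca.length ≤ D)
    (cb : G.Walk (g.getVert (s + r)) b) (hcb : cb.IsPath) (hcblen : cb.length ≤ D) :
    ∃ p : G.Walk a b, p.IsPath ∧ p.length ≤ 2*r + 2*D ∧ g.getVert s ∈ p.support := by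
  have hgpath : g.IsPath := g.isPath_of_length_eq_dist hg
  -- basic distances along g
  have dxep : G.dist x (g.getVert (s+r)) = s + r := by
    have := geo_dist_getVert g hg hc (Nat.zero_le (s+r)) hs2
    rwa [g.getVert_zero, Nat.sub_zero] at this
  have dxem : G.dist x (g.getVert (s-r)) = s - r := by
    have := geo_dist_getVert g hg hc (Nat.zero_le (s-r)) (by omega)
    rwa [g.getVert_zero, Nat.sub_zero] at this
  have dxv : G.dist x (g.getVert s) = s := by
    have := geo_dist_getVert g hg hc (Nat.zero_le s) (by omega)
    rwa [g.getVert_zero, Nat.sub_zero] at this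
  have demv : G.dist (g.getVert (s-r)) (g.getVert s) = r := by
    have := geo_dist_getVert g hg hc (show s - r ≤ s by omega) (by omega)
    rwa [show s - (s - r) = r by omega] at this
  have dvep : G.dist (g.getVert s) (g.getVert (s+r)) = r := by
    have := geo_dist_getVert g hg hc (show s ≤ s + r by omega) hs2
    rwa [show s + r - s = r by omega] at this
  have demep : G.dist (g.getVert (s-r)) (g.getVert (s+r)) = 2*r := by
    have := geo_dist_getVert g hg hc (show s - r ≤ s + r by omega) hs2
    rwa [show s + r - (s - r) = 2*r by omega] at this
  -- the take part of g up to ep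
  have hepg : (g.getVert (s+r)) ∈ g.support := getVert_mem_support g hs2
  have htklen : (g.takeUntil _ hepg).length = s + r := by
    have := (geo_split g hg hc hepg).1
    omega
  have htkgeo : (g.takeUntil _ hepg).length = G.dist x (g.getVert (s+r)) := by omega
  have htkpath : (g.takeUntil _ hepg).IsPath := hgpath.takeUntil hepg
  -- em and v are on tk, at their positions
  have hemtk : (g.getVert (s-r)) ∈ (g.takeUntil _ hepg).support := by
    have h0 : (g.takeUntil _ hepg).getVert (s-r) = g.getVert (s-r) :=
      getVert_takeUntil g hepg (by omega)
    rw [← h0]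
    exact getVert_mem_support _ (by omega)
  have hvtk : (g.getVert s) ∈ (g.takeUntil _ hepg).support := by
    have h0 : (g.takeUntil _ hepg).getVert s = g.getVert s :=
      getVert_takeUntil g hepg (by omega)
    rw [← h0]
    exact getVert_mem_support _ (by omega)
  -- mid : from em to ep
  have hmidpath : ((g.takeUntil _ hepg).dropUntil _ hemtk).IsPath := htkpath.dropUntil hemtk
  have hmidlen : ((g.takeUntil _ hepg).dropUntil _ hemtk).length = 2*r := by
    have h1 := (geo_split _ htkgeo hc hemtk).2
    omega
  have hmidgeo : ((g.takeUntil _ hepg).dropUntil _ hemtk).length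
      = G.dist (g.getVert (s-r)) (g.getVert (s+r)) := by omega
  have hvmid : (g.getVert s) ∈ ((g.takeUntil _ hepg).dropUntil _ hemtk).support := by
    rcases mem_take_or_drop _ hemtk hvtk with h1 | h2
    · exfalso
      have hlen1 : ((g.takeUntil _ hepg).takeUntil _ hemtk).length = s - r := by
        have := (geo_split _ htkgeo hc hemtk).1
        omega
      have : G.dist x (g.getVert s) ≤ s - r := hlen1 ▸ dist_start_le _ h1
      omega
    · exact h2
  -- trim 1
  obtain ⟨w₁, c₁, hc₁path, hc₁len, hc₁sub, hw₁mid, hfirst₁⟩ :=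
    trim_first ca (fun z => z ∈ ((g.takeUntil _ hepg).dropUntil _ hemtk).support)
      (((g.takeUntil _ hepg).dropUntil _ hemtk).start_mem_support) hca
  have hdw₁ : G.dist (g.getVert (s-r)) w₁ ≤ D := by
    have hw₁ca : w₁ ∈ ca.support := hc₁sub w₁ c₁.end_mem_support
    have := dist_end_le ca hw₁ca
    have hcomm : G.dist w₁ (g.getVert (s-r)) = G.dist (g.getVert (s-r)) w₁ :=
      SimpleGraph.dist_comm
    omega
  have hw₁sum : G.dist (g.getVert (s-r)) w₁ + G.dist w₁ (g.getVert (s+r))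
      = G.dist (g.getVert (s-r)) (g.getVert (s+r)) :=
    geo_point_split _ hmidgeo hc hw₁mid
  have hApath : (c₁.append (((g.takeUntil _ hepg).dropUntil _ hemtk).dropUntil w₁ hw₁mid)).IsPath := by
    apply isPath_append hc₁path (hmidpath.dropUntil hw₁mid)
    intro z hz1 hz2
    exact hfirst₁ z hz1 (Walk.support_dropUntil_subset _ hw₁mid hz2)
  have hdroplen : (((g.takeUntil _ hepg).dropUntil _ hemtk).dropUntil w₁ hw₁mid).length
      = G.dist w₁ (g.getVert (s+r)) := (geo_split _ hmidgeo hc hw₁mid).2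
  have hAlen : (c₁.append (((g.takeUntil _ hepg).dropUntil _ hemtk).dropUntil w₁ hw₁mid)).length
      ≤ D + 2*r := by
    rw [Walk.length_append]
    omega
  have hvA : (g.getVert s)
      ∈ (c₁.append (((g.takeUntil _ hepg).dropUntil _ hemtk).dropUntil w₁ hw₁mid)).support := by
    rcases mem_take_or_drop _ hw₁mid hvmid with h1 | h2
    · exfalso
      have hlen1 : (((g.takeUntil _ hepg).dropUntil _ hemtk).takeUntil w₁ hw₁mid).length
          = G.dist (g.getVert (s-r)) w₁ := (geo_split _ hmidgeo hc hw₁mid).1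
      have h6 : G.dist (g.getVert (s-r)) (g.getVert s) ≤ G.dist (g.getVert (s-r)) w₁ :=
        hlen1 ▸ dist_start_le _ h1
      omega
    · exact (Walk.mem_support_append_iff _ _).mpr (Or.inr h2)
  -- trim 2
  obtain ⟨w₂, d₂, hd₂path, hd₂len, hd₂sub, hw₂A, hfirst₂⟩ :=
    trim_first cb.reverse
      (fun z => z ∈ (c₁.append (((g.takeUntil _ hepg).dropUntil _ hemtk).dropUntil w₁ hw₁mid)).support)
      ((c₁.append (((g.takeUntil _ hepg).dropUntil _ hemtk).dropUntil w₁ hw₁mid)).end_mem_support) hcb.reverse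
  have hd₂len' : d₂.length ≤ D := by
    have := cb.length_reverse
    omega
  have hdw₂ep : G.dist w₂ (g.getVert (s+r)) ≤ D := by
    have hw₂cb : w₂ ∈ cb.support := by
      have := hd₂sub w₂ d₂.end_mem_support
      rwa [Walk.support_reverse, List.mem_reverse] at this
    have := dist_start_le cb hw₂cb
    have hcomm : G.dist (g.getVert (s+r)) w₂ = G.dist w₂ (g.getVert (s+r)) :=
      SimpleGraph.dist_comm
    omega
  have htake2len : ((c₁.append (((g.takeUntil _ hepg).dropUntil _ hemtk).dropUntil w₁ hw₁mid)).takeUntil w₂ hw₂A).length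
      ≤ (c₁.append (((g.takeUntil _ hepg).dropUntil _ hemtk).dropUntil w₁ hw₁mid)).length :=
    Walk.length_takeUntil_le _ hw₂A
  have hFpath : (((c₁.append (((g.takeUntil _ hepg).dropUntil _ hemtk).dropUntil w₁ hw₁mid)).takeUntil w₂ hw₂A).append d₂.reverse).IsPath := by
    apply isPath_append (hApath.takeUntil hw₂A) hd₂path.reverse
    intro z hz1 hz2
    rw [Walk.support_reverse, List.mem_reverse] at hz2
    exact hfirst₂ z hz2 (Walk.support_takeUntil_subset _ hw₂A hz1)
  have hFlen : (((c₁.append (((g.takeUntil _ hepg).dropUntil _ hemtk).dropUntil w₁ hw₁mid)).takeUntil w₂ hw₂A).append d₂.reverse).length ≤ 2*r + 2*D := by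
    rw [Walk.length_append, Walk.length_reverse]
    omega
  have htake2len' : 2*r - 2*D
      ≤ ((c₁.append (((g.takeUntil _ hepg).dropUntil _ hemtk).dropUntil w₁ hw₁mid)).takeUntil w₂ hw₂A).length := by
    have h1 : G.dist a w₂ ≤ _ := SimpleGraph.dist_le
      ((c₁.append (((g.takeUntil _ hepg).dropUntil _ hemtk).dropUntil w₁ hw₁mid)).takeUntil w₂ hw₂A)
    have h2 : G.dist (g.getVert (s-r)) w₂ ≤ G.dist (g.getVert (s-r)) a + G.dist a w₂ :=
      hc.dist_triangle
    have h3 : G.dist (g.getVert (s-r)) (g.getVert (s+r))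
        ≤ G.dist (g.getVert (s-r)) w₂ + G.dist w₂ (g.getVert (s+r)) := hc.dist_triangle
    have h4 : G.dist (g.getVert (s-r)) a ≤ D := by
      have h5 : G.dist a (g.getVert (s-r)) ≤ ca.length := SimpleGraph.dist_le ca
      have hcomm : G.dist a (g.getVert (s-r)) = G.dist (g.getVert (s-r)) a :=
        SimpleGraph.dist_comm
      omega
    omega
  have hvF : (g.getVert s)
      ∈ (((c₁.append (((g.takeUntil _ hepg).dropUntil _ hemtk).dropUntil w₁ hw₁mid)).takeUntil w₂ hw₂A).append d₂.reverse).support := by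
    rcases mem_take_or_drop _ hw₂A hvA with h1 | h2
    · exact (Walk.mem_support_append_iff _ _).mpr (Or.inl h1)
    · exfalso
      have hdroplen2 := length_take_add_drop
        (c₁.append (((g.takeUntil _ hepg).dropUntil _ hemtk).dropUntil w₁ hw₁mid)) hw₂A
      have h6 : G.dist (g.getVert s) (g.getVert (s+r))
          ≤ ((c₁.append (((g.takeUntil _ hepg).dropUntil _ hemtk).dropUntil w₁ hw₁mid)).dropUntil w₂ hw₂A).length := dist_end_le _ h2
      omega
  exact ⟨_, hFpath, hFlen, hvF⟩

lemma infinite_fiber {β : Type*} {S : Set ℕ} (hS : S.Infinite) {f : ℕ → β} {T : Set β}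
    (hT : T.Finite) (hf : ∀ n ∈ S, f n ∈ T) : ∃ b, {n | n ∈ S ∧ f n = b}.Infinite := by
  by_contra h
  push_neg at h
  apply hS
  have : S ⊆ ⋃ b ∈ T, {n | n ∈ S ∧ f n = b} := by
    intro n hn
    exact Set.mem_biUnion (hf n hn) ⟨hn, rfl⟩
  exact Set.Finite.subset (Set.Finite.biUnion hT (fun b _ => h b)) this

lemma listset_finite {α : Type*} {S : Set α} (hS : S.Finite) :
    ∀ L : ℕ, {l : List α | l.length = L ∧ ∀ v ∈ l, v ∈ S}.Finite := by
  intro L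
  induction L with
  | zero =>
    apply Set.Finite.subset (Set.finite_singleton ([] : List α))
    rintro l ⟨hl, -⟩
    simp [List.length_eq_zero_iff.mp hl]
  | succ L ih =>
    apply Set.Finite.subset (Set.Finite.image2 (fun a l => a :: l) hS ih)
    rintro l ⟨hl, hmem⟩
    cases l with
    | nil => simp at hl
    | cons a t =>
      refine Set.mem_image2_of_mem (hmem a (by simp)) ⟨?_, ?_⟩
      · simpa using hl
      · intro v hv; exact hmem v (by simp [hv])

/-- diagonal extraction of a nested family of infinite index sets with constant windows -/
lemma diagonal {α : Type*} (W : ℕ → ℕ → α) (T : ℕ → Set α) (hT : ∀ k, (T k).Finite)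
    (M : ℕ → ℕ) (hW : ∀ k n, M k ≤ n → W k n ∈ T k) :
    ∃ φ : ℕ → Set ℕ, (∀ k, (φ k).Infinite) ∧ (∀ k n, n ∈ φ k → M k ≤ n)
      ∧ (∀ k, φ (k+1) ⊆ φ k) ∧ (∀ k m n, m ∈ φ k → n ∈ φ k → W k m = W k n) := by
  have step : ∀ (k : ℕ) (S : Set ℕ), S.Infinite → ∃ S' : Set ℕ, S'.Infinite ∧ S' ⊆ S
      ∧ (∀ n ∈ S', M k ≤ n) ∧ (∀ m ∈ S', ∀ n ∈ S', W k m = W k n) := by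
    intro k S hS
    have h1 : (S \ {n | n < M k}).Infinite := hS.diff (Set.finite_lt_nat (M k))
    obtain ⟨b, hb⟩ := infinite_fiber h1 (f := W k) (hT k) (fun n hn => hW k n (by
      have := hn.2; simp only [Set.mem_setOf_eq] at this; omega))
    refine ⟨{n | n ∈ S \ {n | n < M k} ∧ W k n = b}, hb, ?_, ?_, ?_⟩
    · intro n hn; exact hn.1.1
    · intro n hn; have := hn.1.2; simp only [Set.mem_setOf_eq] at this; omega
    · intro m hm n hn; rw [hm.2, hn.2]
  choose stepS hInf hSub hM hConst using step
  set θ : ℕ → {S : Set ℕ // S.Infinite} := fun k => Nat.rec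
    ⟨stepS 0 Set.univ Set.infinite_univ, hInf 0 Set.univ Set.infinite_univ⟩
    (fun k prev => ⟨stepS (k+1) prev.1 prev.2, hInf (k+1) prev.1 prev.2⟩) k with hθ
  refine ⟨fun k => (θ k).1, fun k => (θ k).2, ?_, ?_, ?_⟩
  · intro k
    cases k with
    | zero => exact hM 0 Set.univ Set.infinite_univ
    | succ k => exact hM (k+1) (θ k).1 (θ k).2
  · intro k
    exact hSub (k+1) (θ k).1 (θ k).2
  · intro k m n hm hn
    cases k with
    | zero => exact hConst 0 Set.univ Set.infinite_univ m hm n hn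
    | succ k => exact hConst (k+1) (θ k).1 (θ k).2 m hm n hn

end Stmt8Aux

/-- Bi-infinite visibility: any two distinct boundary points of a fine hyperbolic
connected graph without global cut point are joined by a bi-infinite geodesic. -/
theorem stmt8 {V : Type*} (G : SimpleGraph V) (δ : ℕ) (hcon : G.Connected)
    (hfine : Fine G) (hhyp : HypGraph G δ)
    (hnocut : ∀ v : V, (SimpleGraph.induce {u : V | u ≠ v} G).Connected)
    (o : V) (u u' : ℕ → V) (hu : ConvInf G o u) (hu' : ConvInf G o u')
    (hdist : ¬ SameBdry G o u u') :
    ∃ ρ : ℤ → V, (∀ m n : ℤ, m ≤ n → (G.dist (ρ m) (ρ n) : ℤ) = n - m) ∧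
      SameBdry G o (fun n : ℕ => ρ (-(n : ℤ))) u ∧
      SameBdry G o (fun n : ℕ => ρ (n : ℤ)) u' := by
  classical
  open Stmt8Aux in
  unfold SameBdry at hdist
  push_neg at hdist
  obtain ⟨N₀, hN₀⟩ := hdist
  -- distances to o grow along u and u'
  have hgrow : ∀ K : ℕ, ∃ M, ∀ i, M ≤ i → (K : ℤ) ≤ (G.dist o (u i) : ℤ) := by
    intro K
    obtain ⟨M, hM⟩ := hu (2*(K : ℤ))
    refine ⟨M, fun i hi => ?_⟩
    have h1 := hM i i hi hi
    rw [Stmt8Aux.gp2_self] at h1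
    omega
  have hgrow' : ∀ K : ℕ, ∃ M, ∀ i, M ≤ i → (K : ℤ) ≤ (G.dist o (u' i) : ℤ) := by
    intro K
    obtain ⟨M, hM⟩ := hu' (2*(K : ℤ))
    refine ⟨M, fun i hi => ?_⟩
    have h1 := hM i i hi hi
    rw [Stmt8Aux.gp2_self] at h1
    omega
  -- selection of the approximating pairs
  have hsel : ∀ n : ℕ, ∃ i j : ℕ, n ≤ i ∧ n ≤ j ∧ gp2 G o (u i) (u' j) < N₀ ∧
      (n : ℤ) ≤ G.dist o (u i) ∧ (n : ℤ) ≤ G.dist o (u' j) := by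
    intro n
    obtain ⟨M₂, h₂⟩ := hgrow n
    obtain ⟨M₃, h₃⟩ := hgrow' n
    obtain ⟨i, j, hi, hj, hlt⟩ := hN₀ (max n (max M₂ M₃))
    exact ⟨i, j, by omega, by omega, hlt, h₂ i (by omega), h₃ j (by omega)⟩
  choose iseq jseq hseli hselj hselgp hselx hsely using hsel
  -- geodesics
  have hgeo : ∀ n : ℕ, ∃ p : G.Walk (u (iseq n)) (u' (jseq n)),
      p.length = G.dist (u (iseq n)) (u' (jseq n)) := fun n =>
    hcon.exists_walk_length_eq_dist _ _
  choose g hg using hgeo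
  have hN₀pos : 0 < N₀ :=
    lt_of_le_of_lt (Stmt8Aux.gp2_nonneg hcon o (u (iseq 0)) (u' (jseq 0))) (hselgp 0)
  set C : ℕ := N₀.toNat + 2*δ with hC
  have hCcast : (C : ℤ) = N₀ + 2*δ := by
    rw [hC]
    push_cast
    rw [Int.toNat_of_nonneg (le_of_lt hN₀pos)]
  -- central points
  have hcen : ∀ n, ∃ t, t ≤ (g n).length ∧ (G.dist o ((g n).getVert t) : ℤ) ≤ C := by
    intro n
    obtain ⟨t, ht, hle⟩ := Stmt8Aux.near_base hcon hhyp o (g n) (hg n)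
    refine ⟨t, ht, ?_⟩
    have h2 := hselgp n
    omega
  choose tq htqle htqC using hcen
  -- distances along geodesics
  have hdista : ∀ n (i j : ℕ), i ≤ j → j ≤ (g n).length →
      G.dist ((g n).getVert i) ((g n).getVert j) = j - i := fun n i j hij hj =>
    Stmt8Aux.geo_dist_getVert (g n) (hg n) hcon hij hj
  -- position of the center
  have hx_t : ∀ n, (G.dist o (u (iseq n)) : ℤ) ≤ tq n + C := by
    intro n
    have h1 : G.dist (u (iseq n)) ((g n).getVert (tq n)) = tq n := by
      have := hdista n 0 (tq n) (Nat.zero_le _) (htqle n)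
      rwa [(g n).getVert_zero, Nat.sub_zero] at this
    have h2 : G.dist o (u (iseq n)) ≤ G.dist o ((g n).getVert (tq n))
        + G.dist ((g n).getVert (tq n)) (u (iseq n)) := hcon.dist_triangle
    have h3 : G.dist ((g n).getVert (tq n)) (u (iseq n))
        = G.dist (u (iseq n)) ((g n).getVert (tq n)) := SimpleGraph.dist_comm
    have h4 := htqC n
    push_cast
    omega
  have hy_t : ∀ n, (G.dist o (u' (jseq n)) : ℤ) ≤ ((g n).length - tq n) + C := by
    intro n
    have h1 : G.dist ((g n).getVert (tq n)) (u' (jseq n)) = (g n).length - tq n := by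
      have := hdista n (tq n) (g n).length (htqle n) (le_refl _)
      rwa [(g n).getVert_length] at this
    have h2 : G.dist o (u' (jseq n)) ≤ G.dist o ((g n).getVert (tq n))
        + G.dist ((g n).getVert (tq n)) (u' (jseq n)) := hcon.dist_triangle
    rw [h1] at h2
    have h4 := htqC n
    have h5 := htqle n
    push_cast
    omega
  set D2 : ℕ := 2*δ with hD2
  set rr : ℕ := 3*D2 + 1 with hrr
  -- thresholds for each level
  have hthr : ∀ k : ℕ, ∃ M : ℕ, (k + C + rr + 1 ≤ M) ∧ ∀ n m, M ≤ n → M ≤ m →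
      ((2*(k + C + rr) + 4*δ + 1 : ℕ) : ℤ) ≤ gp2 G o (u (iseq n)) (u (iseq m)) ∧
      ((2*(k + C + rr) + 4*δ + 1 : ℕ) : ℤ) ≤ gp2 G o (u' (jseq n)) (u' (jseq m)) := by
    intro k
    obtain ⟨M₁, hM₁⟩ := hu ((2*(k + C + rr) + 4*δ + 1 : ℕ) : ℤ)
    obtain ⟨M₂, hM₂⟩ := hu' ((2*(k + C + rr) + 4*δ + 1 : ℕ) : ℤ)
    refine ⟨max (max M₁ M₂) (k + C + rr + 1), by omega, fun n m hn hm => ⟨?_, ?_⟩⟩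
    · exact hM₁ (iseq n) (iseq m) (by have := hseli n; omega) (by have := hseli m; omega)
    · exact hM₂ (jseq n) (jseq m) (by have := hselj n; omega) (by have := hselj m; omega)
  choose Mthr hMge hMprod using hthr
  -- window definedness
  have hwindef : ∀ k n, Mthr k ≤ n → (k + rr + 1 ≤ tq n ∧ tq n + (k + rr + 1) ≤ (g n).length) := by
    intro k n hn
    have h1 := hx_t n
    have h2 := hy_t n
    have h3 := hselx n
    have h4 := hsely n
    have h5 := htqle n
    have h6 := hMge k
    constructor
    · omega
    · omega
  -- the level-k finite vertex sets
  have hSSfin : ∀ k : ℕ, {v : V | ∃ a ∈ (g (Mthr k)).support, ∃ b ∈ (g (Mthr k)).support,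
      ∃ p : G.Walk a b, p.IsPath ∧ p.length ≤ 2*rr + 2*D2 ∧ v ∈ p.support}.Finite := by
    intro k
    apply Set.Finite.subset (Set.Finite.biUnion ((g (Mthr k)).support.finite_toSet) (fun a _ =>
      Set.Finite.biUnion ((g (Mthr k)).support.finite_toSet) (fun b _ =>
        Stmt8Aux.fine_arcs hfine (2*rr + 2*D2) a b)))
    rintro v ⟨a, ha, b, hb, p, hp, hlen, hv⟩
    exact Set.mem_biUnion ha (Set.mem_biUnion hb ⟨p, hp, hlen, hv⟩)
  -- window vertices are in the level-k set
  have hwin : ∀ k n, Mthr k ≤ n → ∀ s : ℕ, rr ≤ s → s + rr ≤ (g n).length →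
      (G.dist o ((g n).getVert s) : ℤ) ≤ (k : ℤ) + C →
      (g n).getVert s ∈ {v : V | ∃ a ∈ (g (Mthr k)).support, ∃ b ∈ (g (Mthr k)).support,
        ∃ p : G.Walk a b, p.IsPath ∧ p.length ≤ 2*rr + 2*D2 ∧ v ∈ p.support} := by
    intro k n hn s hs1 hs2 hsC
    have hfel : ∀ (i : ℕ), i ≤ (g n).length → (G.dist o ((g n).getVert i) : ℤ) ≤ (k : ℤ) + C + rr →
        ∃ a ∈ (g (Mthr k)).support, G.dist ((g n).getVert i) a ≤ 2*δ := by
      intro i hi hiC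
      have hprod := hMprod k n (Mthr k) hn (le_refl _)
      refine Stmt8Aux.fellow hcon hhyp (g n) (hg n) (g (Mthr k)) (hg (Mthr k)) o ((g n).getVert i)
        (Stmt8Aux.getVert_mem_support _ hi) ?_ ?_
      · have := hprod.2
        push_cast at this ⊢
        omega
      · have := hprod.1
        push_cast at this ⊢
        omega
    have hdem : (G.dist o ((g n).getVert (s - rr)) : ℤ) ≤ (k : ℤ) + C + rr := by
      have h1 : G.dist ((g n).getVert (s - rr)) ((g n).getVert s) = rr := by
        have := hdista n (s - rr) s (by omega) (by omega)
        rwa [show s - (s - rr) = rr by omega] at this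
      have h2 : G.dist o ((g n).getVert (s - rr)) ≤ G.dist o ((g n).getVert s)
          + G.dist ((g n).getVert s) ((g n).getVert (s - rr)) := hcon.dist_triangle
      have h3 : G.dist ((g n).getVert s) ((g n).getVert (s - rr))
          = G.dist ((g n).getVert (s - rr)) ((g n).getVert s) := SimpleGraph.dist_comm
      push_cast at hsC ⊢
      omega
    have hdep : (G.dist o ((g n).getVert (s + rr)) : ℤ) ≤ (k : ℤ) + C + rr := by
      have h1 : G.dist ((g n).getVert s) ((g n).getVert (s + rr)) = rr := by
        have := hdista n s (s + rr) (by omega) hs2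
        rwa [show s + rr - s = rr by omega] at this
      have h2 : G.dist o ((g n).getVert (s + rr)) ≤ G.dist o ((g n).getVert s)
          + G.dist ((g n).getVert s) ((g n).getVert (s + rr)) := hcon.dist_triangle
      push_cast at hsC ⊢
      omega
    obtain ⟨a, ha, hda⟩ := hfel (s - rr) (by omega) hdem
    obtain ⟨b, hb, hdb⟩ := hfel (s + rr) hs2 hdep
    obtain ⟨ca, hcap, hcalen⟩ := hcon.exists_path_of_dist a ((g n).getVert (s - rr))
    obtain ⟨cb, hcbp, hcblen⟩ := hcon.exists_path_of_dist ((g n).getVert (s + rr)) b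
    have hcalen' : ca.length ≤ D2 := by
      rw [hcalen]
      have : G.dist a ((g n).getVert (s - rr)) = G.dist ((g n).getVert (s - rr)) a :=
        SimpleGraph.dist_comm
      omega
    have hcblen' : cb.length ≤ D2 := by
      rw [hcblen]
      omega
    obtain ⟨p, hp1, hp2, hp3⟩ := Stmt8Aux.surgery hcon (g n) (hg n)
      (show 3*D2 + 1 ≤ rr by omega) hs1 hs2 ca hcap hcalen' cb hcbp hcblen'
    exact ⟨a, ha, b, hb, p, hp1, hp2, hp3⟩
  -- window lists
  have hWT : ∀ k n, Mthr k ≤ n →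
      ((List.range (2*k+1)).map (fun i => (g n).getVert (tq n - k + i)))
      ∈ {l : List V | l.length = 2*k+1 ∧ ∀ v ∈ l,
          v ∈ {v : V | ∃ a ∈ (g (Mthr k)).support, ∃ b ∈ (g (Mthr k)).support,
            ∃ p : G.Walk a b, p.IsPath ∧ p.length ≤ 2*rr + 2*D2 ∧ v ∈ p.support}} := by
    intro k n hn
    refine ⟨by simp, ?_⟩
    intro v hv
    simp only [List.mem_map, List.mem_range] at hv
    obtain ⟨i, hi, rfl⟩ := hv
    obtain ⟨hk1, hk2⟩ := hwindef k n hn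
    apply hwin k n hn (tq n - k + i) (by omega) (by omega)
    have h4 := htqC n
    rcases le_total (tq n - k + i) (tq n) with hcase | hcase
    · have h1 := hdista n (tq n - k + i) (tq n) hcase (htqle n)
      have h2 : G.dist o ((g n).getVert (tq n - k + i)) ≤ G.dist o ((g n).getVert (tq n))
          + G.dist ((g n).getVert (tq n)) ((g n).getVert (tq n - k + i)) := hcon.dist_triangle
      have h3 : G.dist ((g n).getVert (tq n)) ((g n).getVert (tq n - k + i))
          = G.dist ((g n).getVert (tq n - k + i)) ((g n).getVert (tq n)) := SimpleGraph.dist_comm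
      push_cast
      omega
    · have h1 := hdista n (tq n) (tq n - k + i) hcase (by omega)
      have h2 : G.dist o ((g n).getVert (tq n - k + i)) ≤ G.dist o ((g n).getVert (tq n))
          + G.dist ((g n).getVert (tq n)) ((g n).getVert (tq n - k + i)) := hcon.dist_triangle
      push_cast
      omega
  -- diagonal extraction
  obtain ⟨φ, hφinf, hφM, hφchain, hφconst⟩ := Stmt8Aux.diagonal
    (fun k n => (List.range (2*k+1)).map (fun i => (g n).getVert (tq n - k + i)))
    (fun k => {l : List V | l.length = 2*k+1 ∧ ∀ v ∈ l,
          v ∈ {v : V | ∃ a ∈ (g (Mthr k)).support, ∃ b ∈ (g (Mthr k)).support,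
            ∃ p : G.Walk a b, p.IsPath ∧ p.length ≤ 2*rr + 2*D2 ∧ v ∈ p.support}})
    (fun k => Stmt8Aux.listset_finite (hSSfin k) (2*k+1)) Mthr hWT
  have hanti : ∀ k k' : ℕ, k ≤ k' → φ k' ⊆ φ k := by
    intro k k' hk
    induction k', hk using Nat.le_induction with
    | base => exact fun _ h => h
    | succ k' hk ih => exact fun n hn => ih (hφchain k' hn)
  have hpick : ∀ k, ∃ n, n ∈ φ k := fun k => (hφinf k).nonempty
  choose pick hpickmem using hpick
  -- coherence of the limit
  have hcoh : ∀ (t : ℤ) (k : ℕ), t.natAbs ≤ k →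
      (g (pick t.natAbs)).getVert ((tq (pick t.natAbs) : ℤ) + t).toNat
        = (g (pick k)).getVert ((tq (pick k) : ℤ) + t).toNat := by
    intro t k hk
    have hmem1 : pick t.natAbs ∈ φ t.natAbs := hpickmem _
    have hmem2 : pick k ∈ φ t.natAbs := hanti _ _ hk (hpickmem k)
    have hWeq := hφconst t.natAbs _ _ hmem1 hmem2
    have hilt : (t + t.natAbs).toNat < 2*t.natAbs + 1 := by omega
    have hcoord := congrArg (fun l => l[(t + t.natAbs).toNat]?) hWeq
    simp only [List.getElem?_map, List.getElem?_range, hilt, if_pos, Option.map_some,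
      Option.some.injEq] at hcoord
    have hw1 := (hwindef t.natAbs _ (hφM _ _ hmem1)).1
    have hw2 := (hwindef t.natAbs _ (hφM _ _ hmem2)).1
    have e1 : tq (pick t.natAbs) - t.natAbs + (t + t.natAbs).toNat
        = ((tq (pick t.natAbs) : ℤ) + t).toNat := by omega
    have e2 : tq (pick k) - t.natAbs + (t + t.natAbs).toNat
        = ((tq (pick k) : ℤ) + t).toNat := by omega
    rw [e1, e2] at hcoord
    exact hcoord
  -- the bi-infinite geodesic
  refine ⟨fun t => (g (pick t.natAbs)).getVert ((tq (pick t.natAbs) : ℤ) + t).toNat, ?_, ?_, ?_⟩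
  · -- geodesic property
    intro m n hmn
    beta_reduce
    rw [hcoh m (max m.natAbs n.natAbs) (le_max_left _ _),
        hcoh n (max m.natAbs n.natAbs) (le_max_right _ _)]
    have hw := hwindef (max m.natAbs n.natAbs) _ (hφM _ _ (hpickmem (max m.natAbs n.natAbs)))
    have hle1 : ((tq (pick (max m.natAbs n.natAbs)) : ℤ) + m).toNat
        ≤ ((tq (pick (max m.natAbs n.natAbs)) : ℤ) + n).toNat := by omega
    have hle2 : ((tq (pick (max m.natAbs n.natAbs)) : ℤ) + n).toNat
        ≤ (g (pick (max m.natAbs n.natAbs))).length := by omega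
    rw [hdista _ _ _ hle1 hle2]
    omega
  · -- converges to the boundary point of u
    intro N
    obtain ⟨M₁, hM₁⟩ := hu (2*N + 6*(δ:ℤ))
    refine ⟨max M₁ ((N + C + 3*(δ:ℤ)).toNat + 1), fun i j hi hj => ?_⟩
    beta_reduce
    have hnat : (-(i:ℤ)).natAbs = i := by omega
    rw [show (-(i:ℤ)) = -(i:ℤ) from rfl] at *
    rw [hcoh (-(i:ℤ)) i (by omega)]
    set n₀ := pick i with hn₀
    have hn₀M : Mthr i ≤ n₀ := hφM _ _ (hpickmem i)
    have hwd := hwindef i n₀ hn₀M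
    have hge := hMge i
    -- the point a on the geodesic
    have hpos : ((tq n₀ : ℤ) + (-(i:ℤ))).toNat = tq n₀ - i := by omega
    rw [hpos]
    -- distances
    have F1 : G.dist (u (iseq n₀)) ((g n₀).getVert (tq n₀ - i)) = tq n₀ - i := by
      have := hdista n₀ 0 (tq n₀ - i) (Nat.zero_le _) (by omega)
      rwa [(g n₀).getVert_zero, Nat.sub_zero] at this
    have F2 : G.dist ((g n₀).getVert (tq n₀ - i)) ((g n₀).getVert (tq n₀)) = i := by
      have := hdista n₀ (tq n₀ - i) (tq n₀) (by omega) (htqle n₀)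
      rwa [show tq n₀ - (tq n₀ - i) = i by omega] at this
    have F3 : (G.dist ((g n₀).getVert (tq n₀ - i)) ((g n₀).getVert (tq n₀)) : ℤ)
        ≤ G.dist o ((g n₀).getVert (tq n₀ - i)) + G.dist o ((g n₀).getVert (tq n₀)) := by
      have h := hcon.dist_triangle (u := (g n₀).getVert (tq n₀ - i)) (v := o)
        (w := (g n₀).getVert (tq n₀))
      have hcomm : G.dist ((g n₀).getVert (tq n₀ - i)) o = G.dist o ((g n₀).getVert (tq n₀ - i)) :=
        SimpleGraph.dist_comm
      push_cast
      omega
    have F4 : (G.dist (u (iseq n₀)) ((g n₀).getVert (tq n₀)) : ℤ)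
        ≤ G.dist o (u (iseq n₀)) + G.dist o ((g n₀).getVert (tq n₀)) := by
      have h := hcon.dist_triangle (u := u (iseq n₀)) (v := o) (w := (g n₀).getVert (tq n₀))
      have hcomm : G.dist (u (iseq n₀)) o = G.dist o (u (iseq n₀)) := SimpleGraph.dist_comm
      push_cast
      omega
    have F5 : G.dist (u (iseq n₀)) ((g n₀).getVert (tq n₀)) = tq n₀ := by
      have := hdista n₀ 0 (tq n₀) (Nat.zero_le _) (htqle n₀)
      rwa [(g n₀).getVert_zero, Nat.sub_zero] at this
    have hgpa : (2*(i:ℤ) - 2*C) ≤ gp2 G o ((g n₀).getVert (tq n₀ - i)) (u (iseq n₀)) := by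
      have hcen := htqC n₀
      have hcd : G.dist ((g n₀).getVert (tq n₀ - i)) (u (iseq n₀))
          = G.dist (u (iseq n₀)) ((g n₀).getVert (tq n₀ - i)) := SimpleGraph.dist_comm
      unfold gp2
      push_cast
      omega
    have h4pt := Stmt8Aux.four_point hcon hhyp o ((g n₀).getVert (tq n₀ - i)) (u (iseq n₀)) (u j)
    have hgpb : (2*N + 6*(δ:ℤ)) ≤ gp2 G o (u (iseq n₀)) (u j) := by
      apply hM₁ (iseq n₀) j _ (by omega)
      have := hseli n₀
      omega
    have hi' : (N + C + 3*(δ:ℤ)) < i := by omega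
    omega
  · -- converges to the boundary point of u'
    intro N
    obtain ⟨M₁, hM₁⟩ := hu' (2*N + 6*(δ:ℤ))
    refine ⟨max M₁ ((N + C + 3*(δ:ℤ)).toNat + 1), fun i j hi hj => ?_⟩
    beta_reduce
    rw [hcoh (i:ℤ) i (by omega)]
    set n₀ := pick i with hn₀
    have hn₀M : Mthr i ≤ n₀ := hφM _ _ (hpickmem i)
    have hwd := hwindef i n₀ hn₀M
    have hge := hMge i
    have hpos : ((tq n₀ : ℤ) + (i:ℤ)).toNat = tq n₀ + i := by omega
    rw [hpos]
    have F1 : G.dist ((g n₀).getVert (tq n₀ + i)) (u' (jseq n₀)) = (g n₀).length - (tq n₀ + i) := by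
      have := hdista n₀ (tq n₀ + i) (g n₀).length (by omega) (le_refl _)
      rwa [(g n₀).getVert_length] at this
    have F2 : G.dist ((g n₀).getVert (tq n₀)) ((g n₀).getVert (tq n₀ + i)) = i := by
      have := hdista n₀ (tq n₀) (tq n₀ + i) (by omega) (by omega)
      rwa [show tq n₀ + i - tq n₀ = i by omega] at this
    have F3 : (G.dist ((g n₀).getVert (tq n₀)) ((g n₀).getVert (tq n₀ + i)) : ℤ)
        ≤ G.dist o ((g n₀).getVert (tq n₀ + i)) + G.dist o ((g n₀).getVert (tq n₀)) := by
      have h := hcon.dist_triangle (u := (g n₀).getVert (tq n₀)) (v := o)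
        (w := (g n₀).getVert (tq n₀ + i))
      have hcomm : G.dist ((g n₀).getVert (tq n₀)) o = G.dist o ((g n₀).getVert (tq n₀)) :=
        SimpleGraph.dist_comm
      push_cast
      omega
    have F4 : (G.dist ((g n₀).getVert (tq n₀)) (u' (jseq n₀)) : ℤ)
        ≤ G.dist o (u' (jseq n₀)) + G.dist o ((g n₀).getVert (tq n₀)) := by
      have h := hcon.dist_triangle (u := (g n₀).getVert (tq n₀)) (v := o) (w := u' (jseq n₀))
      have hcomm : G.dist ((g n₀).getVert (tq n₀)) o = G.dist o ((g n₀).getVert (tq n₀)) :=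
        SimpleGraph.dist_comm
      push_cast
      omega
    have F5 : G.dist ((g n₀).getVert (tq n₀)) (u' (jseq n₀)) = (g n₀).length - tq n₀ := by
      have := hdista n₀ (tq n₀) (g n₀).length (htqle n₀) (le_refl _)
      rwa [(g n₀).getVert_length] at this
    have hgpa : (2*(i:ℤ) - 2*C) ≤ gp2 G o ((g n₀).getVert (tq n₀ + i)) (u' (jseq n₀)) := by
      have hcen := htqC n₀
      have h5 := htqle n₀
      unfold gp2
      push_cast
      omega
    have h4pt := Stmt8Aux.four_point hcon hhyp o ((g n₀).getVert (tq n₀ + i)) (u' (jseq n₀)) (u' j)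
    have hgpb : (2*N + 6*(δ:ℤ)) ≤ gp2 G o (u' (jseq n₀)) (u' j) := by
      apply hM₁ (jseq n₀) j _ (by omega)
      have := hselj n₀
      omega
    have hi' : (N + C + 3*(δ:ℤ)) < i := by omega
    omega
end

section
/- Let φ be a Busemann cocycle on a hyperbolic graph associated to a geodesic ray ρ, i.e., φ(w,v) = h_ρ(v) − h_ρ(w) where h_ρ(v) = lim_{n→∞}(dist(v, ρ(n)) − n). Then every gradient line of φ (a sequence of vertices (v_n) with φ(v_{n+1}, v_n) = 1 for all n) is the vertex sequence of a geodesic ray asymptotic to ρ, and there is a gradient line starting from every vertex. -/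
open Filter Topology

namespace SimpleGraph

variable {V : Type*} {G : SimpleGraph V}

lemma exists_walk_of_adj_succ {l : ℕ → V} (hl : ∀ n, G.Adj (l n) (l (n + 1))) {a b : ℕ}
    (hab : a ≤ b) :
    ∃ p : G.Walk (l a) (l b), p.length = b - a ∧ ∀ v ∈ p.support, ∃ k, v = l k := by
  induction b, hab using Nat.le_induction with
  | base => exact ⟨Walk.nil, by simp, fun v hv => ⟨a, by simpa using hv⟩⟩
  | succ b hab ih =>
    obtain ⟨p, hlen, hsupp⟩ := ih
    refine ⟨p.concat (hl b), by rw [Walk.length_concat]; omega, fun v hv => ?_⟩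
    rw [Walk.support_concat, List.mem_append, List.mem_singleton] at hv
    exact hv.elim (hsupp v) fun hv => ⟨b + 1, hv⟩

lemma dist_le_of_adj_succ {l : ℕ → V} (hl : ∀ n, G.Adj (l n) (l (n + 1))) {a b : ℕ}
    (hab : a ≤ b) : G.dist (l a) (l b) ≤ b - a :=
  let ⟨p, hlen, _⟩ := exists_walk_of_adj_succ hl hab
  hlen ▸ dist_le p

lemma Reachable.exists_adj_dist_lt {v w : V} (hr : G.Reachable v w) (hne : v ≠ w) :
    ∃ x, G.Adj v x ∧ G.dist x w < G.dist v w := by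
  obtain ⟨p, hp⟩ := hr.exists_walk_length_eq_dist
  obtain ⟨x, hx, q, rfl⟩ := p.exists_eq_cons_of_ne hne
  rw [Walk.length_cons] at hp
  exact ⟨x, hx, (dist_le q).trans_lt (by omega)⟩

end SimpleGraph

open SimpleGraph

section

variable {V : Type*} {G : SimpleGraph V}

lemma eq_sub_of_forall_sub_succ_eq_one {a : ℕ → ℤ} (ha : ∀ n, a n - a (n + 1) = 1) (n : ℕ) :
    a n = a 0 - n := by
  induction n with
  | zero => simp
  | succ n ih => have := ha n; push_cast; omega

lemma geodRay_of_sub_succ_eq_one {f : V → ℤ} (hf : ∀ x y, f x - f y ≤ G.dist x y)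
    {l : ℕ → V} (hadj : ∀ n, G.Adj (l n) (l (n + 1)))
    (hgrad : ∀ n, f (l n) - f (l (n + 1)) = 1) : GeodRay G l := by
  refine ⟨hadj, fun m n hmn => le_antisymm (dist_le_of_adj_succ hadj hmn) ?_⟩
  have hm := eq_sub_of_forall_sub_succ_eq_one (a := f ∘ l) hgrad m
  have hn := eq_sub_of_forall_sub_succ_eq_one (a := f ∘ l) hgrad n
  have := hf (l m) (l n)
  simp only [Function.comp_apply] at hm hn
  omega

lemma HypGraph.exists_dist_geodRay_le {δ : ℕ} (hhyp : HypGraph G δ) (hcon : G.Connected)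
    {ρ : ℕ → V} (hρ : GeodRay G ρ) {o : V} {m : ℕ} (r : G.Walk o (ρ m))
    (hr : r.length = G.dist o (ρ m)) {w : V} (hw : w ∈ r.support) :
    ∃ k, G.dist w (ρ k) ≤ δ + G.dist o (ρ 0) := by
  obtain ⟨p, hp⟩ := hcon.exists_walk_length_eq_dist o (ρ 0)
  obtain ⟨q, hq, hqsupp⟩ := exists_walk_of_adj_succ hρ.1 (Nat.zero_le m)
  have hqd : q.length = G.dist (ρ 0) (ρ m) := by rw [hρ.2 0 m (Nat.zero_le m), hq]
  obtain ⟨u, hu | hu, hwu⟩ := hhyp p q r hp hqd hr w hw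
  · obtain ⟨p₁, p₂, rfl⟩ := Walk.mem_support_iff_exists_append.mp hu
    have := hcon.dist_triangle (u := w) (v := u) (w := ρ 0)
    have := dist_le p₂
    rw [Walk.length_append] at hp
    exact ⟨0, by omega⟩
  · obtain ⟨k, rfl⟩ := hqsupp u hu
    exact ⟨k, by omega⟩

def IsBusemann (G : SimpleGraph V) (ρ : ℕ → V) (h : V → ℤ) : Prop :=
  ∀ v, Tendsto (fun n : ℕ => (G.dist v (ρ n) : ℤ) - n) atTop (𝓝 (h v))

namespace IsBusemann

variable {ρ : ℕ → V} {h : V → ℤ}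

lemma eventually_dist_eq (hB : IsBusemann G ρ h) (v : V) :
    ∀ᶠ n in atTop, (G.dist v (ρ n) : ℤ) = h v + n := by
  have := hB v
  rw [nhds_discrete, tendsto_pure] at this
  exact this.mono fun n hn => by omega

variable (hcon : G.Connected) (hρ : GeodRay G ρ)
include hcon hρ

lemma le_dist_sub (hB : IsBusemann G ρ h) (v : V) (n : ℕ) : h v ≤ G.dist v (ρ n) - n := by
  obtain ⟨k, hk, hnk⟩ := ((hB.eventually_dist_eq v).and (eventually_ge_atTop n)).exists
  have := hcon.dist_triangle (u := v) (v := ρ n) (w := ρ k)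
  have := hρ.2 n k hnk
  omega

lemma sub_le_dist (hB : IsBusemann G ρ h) (x y : V) : h x - h y ≤ G.dist x y := by
  obtain ⟨n, hn⟩ := (hB.eventually_dist_eq y).exists
  have := hB.le_dist_sub hcon hρ x n
  have := hcon.dist_triangle (u := x) (v := y) (w := ρ n)
  omega

lemma exists_adj_eq_sub_one (hB : IsBusemann G ρ h) (v : V) :
    ∃ x, G.Adj v x ∧ h x = h v - 1 := by
  obtain ⟨n, hn, hlarge⟩ :=
    ((hB.eventually_dist_eq v).and (eventually_gt_atTop (-h v).toNat)).exists
  have hne : v ≠ ρ n := by rintro rfl; simp at hn; omega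
  obtain ⟨x, hx, hlt⟩ := (hcon v (ρ n)).exists_adj_dist_lt hne
  have hlip := hB.sub_le_dist hcon hρ v x
  have := hB.le_dist_sub hcon hρ x n
  rw [dist_eq_one_iff_adj.mpr hx] at hlip
  exact ⟨x, hx, by omega⟩

lemma exists_gradient_line (hB : IsBusemann G ρ h) (v : V) :
    ∃ l : ℕ → V, l 0 = v ∧ (∀ n, G.Adj (l n) (l (n + 1))) ∧
      ∀ n, h (l n) - h (l (n + 1)) = 1 := by
  choose f hadj hdrop using hB.exists_adj_eq_sub_one hcon hρ
  refine ⟨fun n => f^[n] v, rfl, fun n => ?_, fun n => ?_⟩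
  · simpa only [Function.iterate_succ_apply'] using hadj _
  · simp only [Function.iterate_succ_apply', hdrop]
    omega

lemma exists_dist_le_of_gradient {δ : ℕ} (hhyp : HypGraph G δ) (hB : IsBusemann G ρ h)
    {l : ℕ → V} (hl : GeodRay G l) (hgrad : ∀ n, h (l n) - h (l (n + 1)) = 1) (n : ℕ) :
    ∃ k, G.dist (l n) (ρ k) ≤ δ + G.dist (l 0) (ρ 0) := by
  obtain ⟨m, h0, hn⟩ := ((hB.eventually_dist_eq (l 0)).and (hB.eventually_dist_eq (l n))).exists
  have hdrop := eq_sub_of_forall_sub_succ_eq_one (a := h ∘ l) hgrad n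
  have hln := hl.2 0 n (Nat.zero_le n)
  simp only [Function.comp_apply] at hdrop
  obtain ⟨p₁, hp₁⟩ := hcon.exists_walk_length_eq_dist (l 0) (l n)
  obtain ⟨p₂, hp₂⟩ := hcon.exists_walk_length_eq_dist (l n) (ρ m)
  -- `h` drops by `n` from `l 0` to `l n`, so `l n` lies on a geodesic from `l 0` to `ρ m`.
  have hgeod : (p₁.append p₂).length = G.dist (l 0) (ρ m) := by
    rw [Walk.length_append, hp₁, hp₂]
    omega
  exact hhyp.exists_dist_geodRay_le hcon hρ _ hgeod
    (Walk.support_subset_support_append_left p₁ p₂ p₁.end_mem_support)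

end IsBusemann

end

theorem stmt9_general {V : Type*} (G : SimpleGraph V) (δ : ℕ) (hcon : G.Connected)
    (hhyp : HypGraph G δ)
    (ρ : ℕ → V) (hρ : GeodRay G ρ) (h : V → ℤ)
    (hBus : ∀ v : V, Filter.Tendsto (fun n : ℕ => (G.dist v (ρ n) : ℤ) - n)
      Filter.atTop (nhds (h v))) :
    (∀ l : ℕ → V, (∀ n, G.Adj (l n) (l (n + 1))) →
      (∀ n, h (l n) - h (l (n + 1)) = 1) →
      GeodRay G l ∧ ∃ C : ℕ, ∀ n, ∃ m, G.dist (l n) (ρ m) ≤ C) ∧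
    (∀ v : V, ∃ l : ℕ → V, l 0 = v ∧ (∀ n, G.Adj (l n) (l (n + 1))) ∧
      ∀ n, h (l n) - h (l (n + 1)) = 1) := by
  have hB : IsBusemann G ρ h := hBus
  refine ⟨fun l hadj hgrad => ?_, hB.exists_gradient_line hcon hρ⟩
  have hl := geodRay_of_sub_succ_eq_one (hB.sub_le_dist hcon hρ) hadj hgrad
  exact ⟨hl, _, hB.exists_dist_le_of_gradient hcon hρ hhyp hl hgrad⟩

/-- Gradient lines of a Busemann cocycle are geodesic rays asymptotic to the defining
ray `ρ`, and there is a gradient line starting from every vertex.  Here `h` is the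
Busemann function of `ρ`, `φ(w,v) = h(v) - h(w)`, and a gradient line is a sequence
of consecutive adjacent vertices with `φ(v_{n+1}, v_n) = 1`.  The graph is fine,
`δ`-hyperbolic, connected, and has the visibility property. -/
theorem stmt9 {V : Type*} (G : SimpleGraph V) (δ : ℕ) (hcon : G.Connected)
    (hfine : Fine G) (hhyp : HypGraph G δ)
    (hvis : ∀ (o : V) (u : ℕ → V), ConvInf G o u →
      ∃ ρ : ℕ → V, GeodRay G ρ ∧ ρ 0 = o ∧ SameBdry G o ρ u)
    (ρ : ℕ → V) (hρ : GeodRay G ρ) (h : V → ℤ)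
    (hBus : ∀ v : V, Filter.Tendsto (fun n : ℕ => (G.dist v (ρ n) : ℤ) - n)
      Filter.atTop (nhds (h v))) :
    (∀ l : ℕ → V, (∀ n, G.Adj (l n) (l (n + 1))) →
      (∀ n, h (l n) - h (l (n + 1)) = 1) →
      GeodRay G l ∧ ∃ C : ℕ, ∀ n, ∃ m, G.dist (l n) (ρ m) ≤ C) ∧
    (∀ v : V, ∃ l : ℕ → V, l 0 = v ∧ (∀ n, G.Adj (l n) (l (n + 1))) ∧
      ∀ n, h (l n) - h (l (n + 1)) = 1) :=
  stmt9_general G δ hcon hhyp ρ hρ h hBus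
end

section
/- The action of ℤ on its one-point compactification ℤ ∪ {∞} is a finitely presented dynamical system with special symbol: there is a finite alphabet A containing a symbol $, a subshift of finite type Φ ⊆ A^ℤ, and a continuous, surjective, ℤ-equivariant map π : Φ → ℤ ∪ {∞} such that π(σ) = n ∈ ℤ if and only if σ(n) = $. -/
/-!
Use the alphabet `{before, dollar, after}` and allow exactly the adjacent pairs
`before before`, `before dollar`, `dollar after`, `after after`. The letter `after` then
propagates to the right, so a configuration contains at most one `$`, and `π` sends it to
the position of its `$`, or to `∞` if it has none. The fibre of `π` over `n` is the clopen
cylinder `{σ | σ n = $}`. A neighbourhood of `∞` leaves out only finitely many of these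
fibres, so `π` is continuous.
-/

open OnePoint Set Function

/-- A subshift of finite type over `ℤ`: the intersection of all `ℤ`-translates of a
cylinder given by a finite window `F` and a set `M` of allowed patterns on `F`. -/
def IsSFTZ {A : Type*} (Φ : Set (ℤ → A)) : Prop :=
  ∃ (F : Finset ℤ) (M : Set (F → A)),
    Φ = {σ : ℤ → A | ∀ k : ℤ, (fun f : F => σ (k + f)) ∈ M}

/-- The translation action of `ℤ` on its one-point compactification, fixing `∞`. -/
def ptTranslateZ (k : ℤ) (x : OnePoint ℤ) : OnePoint ℤ :=
  (Option.map (k + ·) x : Option ℤ)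

theorem isSFTZ_setOf_forall_rel {A : Type*} (P : A → A → Prop) :
    IsSFTZ {σ : ℤ → A | ∀ k, P (σ k) (σ (k + 1))} :=
  ⟨{0, 1}, {w | P (w ⟨0, by simp⟩) (w ⟨1, by simp⟩)}, by ext σ; simp⟩

theorem ptTranslateZ_infty (k : ℤ) : ptTranslateZ k ∞ = ∞ := rfl

theorem ptTranslateZ_coe (k n : ℤ) : ptTranslateZ k n = ↑(k + n) := rfl

theorem ptTranslateZ_eq_coe_iff {k m : ℤ} {x : OnePoint ℤ} :
    ptTranslateZ k x = m ↔ x = ↑(m - k) := by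
  induction x using OnePoint.rec with
  | infty => simp [ptTranslateZ_infty]
  | coe n => rw [ptTranslateZ_coe, coe_eq_coe, coe_eq_coe]; lia

theorem OnePoint.eq_iff_forall_eq_coe_iff {X : Type*} {x y : OnePoint X} :
    x = y ↔ ∀ n : X, x = n ↔ y = n := by
  refine ⟨fun h => by simp [h], fun h => ?_⟩
  induction x using OnePoint.rec <;> induction y using OnePoint.rec <;> simp_all

theorem OnePoint.continuous_of_isClopen_preimage_coe {Y X : Type*} [TopologicalSpace Y]
    [TopologicalSpace X] [DiscreteTopology X] {f : Y → OnePoint X}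
    (hf : ∀ x : X, IsClopen (f ⁻¹' {(x : OnePoint X)})) : Continuous f := by
  refine continuous_def.2 fun s hs => ?_
  by_cases hs_infty : ∞ ∈ s
  · have hfin : ((↑) ⁻¹' s : Set X)ᶜ.Finite :=
      ((isOpen_iff_of_mem hs_infty).1 hs).2.finite_of_discrete
    have : f ⁻¹' s = (⋃ x ∈ ((↑) ⁻¹' s : Set X)ᶜ, f ⁻¹' {(x : OnePoint X)})ᶜ := by
      ext y
      simp only [mem_preimage, mem_compl_iff, mem_iUnion, mem_singleton_iff, exists_prop]
      generalize f y = z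
      induction z using OnePoint.rec <;> simp [hs_infty]
    rw [this]
    exact (hfin.isClosed_biUnion fun x _ => (hf x).1).isOpen_compl
  · have : f ⁻¹' s = ⋃ x ∈ ((↑) ⁻¹' s : Set X), f ⁻¹' {(x : OnePoint X)} := by
      ext y
      simp only [mem_preimage, mem_iUnion, mem_singleton_iff, exists_prop]
      generalize f y = z
      induction z using OnePoint.rec <;> simp [hs_infty]
    rw [this]
    exact isOpen_biUnion fun x _ => (hf x).2

inductive Letter : Type
  | before | dollar | after
  deriving DecidableEq

instance : Fintype Letter := ⟨{.before, .dollar, .after}, fun x => by cases x <;> decide⟩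

namespace Letter

def CanPrecede : Letter → Letter → Prop
  | before, before | before, dollar | dollar, after | after, after => True
  | _, _ => False

def markerShift : Set (ℤ → Letter) := {σ | ∀ k, CanPrecede (σ k) (σ (k + 1))}

section markerShift

variable {σ : ℤ → Letter} (hσ : σ ∈ markerShift)
include hσ

theorem succ_eq_after {n : ℤ} (hn : σ n ≠ before) : σ (n + 1) = after := by
  have := hσ n
  revert this hn
  cases σ n <;> cases σ (n + 1) <;> simp [CanPrecede]

theorem eq_after_of_eq_dollar_of_lt {n m : ℤ} (hn : σ n = dollar) (hnm : n < m) :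
    σ m = after := by
  induction m, (hnm : n + 1 ≤ m) using Int.leInduction with
  | base => exact succ_eq_after hσ (by simp [hn])
  | succ m _ ih => exact succ_eq_after hσ (by simp [ih])

theorem eq_of_eq_dollar {n m : ℤ} (hn : σ n = dollar) (hm : σ m = dollar) : n = m := by
  by_contra hne
  rcases lt_or_gt_of_ne hne with h | h
  · simp [eq_after_of_eq_dollar_of_lt hσ hn h] at hm
  · simp [eq_after_of_eq_dollar_of_lt hσ hm h] at hn

theorem shift_mem_markerShift (k : ℤ) : (fun m => σ (m - k)) ∈ markerShift := fun m => by
  simpa only [sub_add_eq_add_sub] using hσ (m - k)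

end markerShift

open Classical in
noncomputable def dollarPos (σ : ℤ → Letter) : OnePoint ℤ :=
  if h : ∃ n, σ n = dollar then (h.choose : OnePoint ℤ) else ∞

theorem dollarPos_eq_coe_iff {σ : ℤ → Letter} (hσ : σ ∈ markerShift) (n : ℤ) :
    dollarPos σ = n ↔ σ n = dollar := by
  unfold dollarPos
  split_ifs with h
  · rw [coe_eq_coe]
    exact ⟨fun e => e ▸ h.choose_spec, eq_of_eq_dollar hσ h.choose_spec⟩
  · exact ⟨fun e => (infty_ne_coe n e).elim, fun hn => (h ⟨n, hn⟩).elim⟩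

theorem dollarPos_shift {σ : ℤ → Letter} (hσ : σ ∈ markerShift) (k : ℤ) :
    dollarPos (fun m => σ (m - k)) = ptTranslateZ k (dollarPos σ) :=
  OnePoint.eq_iff_forall_eq_coe_iff.2 fun m => by
    rw [dollarPos_eq_coe_iff (shift_mem_markerShift hσ k), ptTranslateZ_eq_coe_iff,
      dollarPos_eq_coe_iff hσ]

theorem continuous_dollarPos [TopologicalSpace Letter] [DiscreteTopology Letter] :
    Continuous (fun σ : markerShift => dollarPos σ.1) :=
  OnePoint.continuous_of_isClopen_preimage_coe fun n => by
    have : (fun σ : markerShift => dollarPos σ.1) ⁻¹' {(n : OnePoint ℤ)} =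
        (fun σ : markerShift => σ.1 n) ⁻¹' {dollar} := by
      ext σ
      exact dollarPos_eq_coe_iff σ.2 n
    rw [this]
    exact (isClopen_discrete _).preimage ((continuous_apply n).comp continuous_subtype_val)

def dollarAt (n : ℤ) : ℤ → Letter :=
  fun m => if m < n then before else if m = n then dollar else after

theorem dollarAt_mem_markerShift (n : ℤ) : dollarAt n ∈ markerShift := fun k => by
  simp only [dollarAt]
  split_ifs <;> first | trivial | lia

theorem surjective_dollarPos : Surjective (fun σ : markerShift => dollarPos σ.1) := by
  intro x
  induction x using OnePoint.rec with
  | infty => exact ⟨⟨fun _ => before, fun _ => trivial⟩, dif_neg (by simp)⟩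
  | coe n =>
    exact ⟨⟨dollarAt n, dollarAt_mem_markerShift n⟩,
      (dollarPos_eq_coe_iff (dollarAt_mem_markerShift n) n).2 (by simp [dollarAt])⟩

end Letter

/-- The action of `ℤ` on its one-point compactification `ℤ ∪ {∞}` is a finitely
presented dynamical system with special symbol: there is a finite alphabet `A` with a
symbol `$`, a subshift of finite type `Φ ⊆ A^ℤ` and a continuous surjective
`ℤ`-equivariant map `π : Φ → ℤ ∪ {∞}` with `π σ = n` iff `σ n = $`. -/
theorem stmt14 :
    ∃ (A : Type) (_ : Fintype A) (dollar : A) (Φ : Set (ℤ → A))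
      (π : (ℤ → A) → OnePoint ℤ),
      IsSFTZ Φ ∧
      (letI : TopologicalSpace A := ⊥;
        Continuous (fun σ : Φ => π σ.1)) ∧
      Function.Surjective (fun σ : Φ => π σ.1) ∧
      (∀ σ ∈ Φ, ∀ k : ℤ, π (fun m => σ (m - k)) = ptTranslateZ k (π σ)) ∧
      (∀ σ ∈ Φ, ∀ n : ℤ, π σ = (n : OnePoint ℤ) ↔ σ n = dollar) :=
  ⟨Letter, inferInstance, .dollar, Letter.markerShift, Letter.dollarPos,
    isSFTZ_setOf_forall_rel Letter.CanPrecede,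
    @Letter.continuous_dollarPos ⊥ (discreteTopology_bot _), Letter.surjective_dollarPos,
    fun _ hσ => Letter.dollarPos_shift hσ, fun _ hσ => Letter.dollarPos_eq_coe_iff hσ⟩
end

section
/- If an infinite group Γ has the property of special symbol (its action on its one-point compactification Γ ∪ {∞} is finitely presented by a subshift of finite type Φ ⊆ A^Γ with a special symbol $ such that π(σ) = γ ∈ Γ iff σ(γ) = $), then Γ is finitely generated. -/
/-- A subshift of finite type over a group `G`: the intersection of all `G`-translates
of a cylinder given by a finite window `F ⊆ G` and a set `M` of allowed patterns
on `F` (the shift action being `(γ·σ)(g) = σ(γ⁻¹g)`). -/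
def IsSFT {G : Type*} [Group G] {A : Type*} (Φ : Set (G → A)) : Prop :=
  ∃ (F : Finset G) (M : Set (F → A)),
    Φ = {σ : G → A | ∀ γ : G, (fun f : F => σ (γ * f)) ∈ M}

/-- The left translation action of `γ ∈ G` on the one-point compactification
`G ∪ {∞}`, fixing `∞`. -/
def ptTranslate {G : Type*} [Group G] (γ : G) (x : OnePoint G) : OnePoint G :=
  (Option.map (fun g => γ * g) x : Option G)

/-- A (discrete) group `G` has the property of special symbol if its action on its
Alexandrov compactification `G ∪ {∞}` (on `G` itself when `G` is finite) is finitely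
presented with a special symbol: there are a finite alphabet `A` with a symbol `$`,
a subshift of finite type `Φ ⊆ A^G`, and a continuous surjective `G`-equivariant
map `π : Φ → G ∪ {∞}` such that `π σ = g ∈ G` iff `σ g = $`. -/
def HasSpecialSymbol (G : Type*) [Group G] : Prop :=
  ∃ (A : Type) (_ : Fintype A) (dollar : A) (Φ : Set (G → A))
    (π : (G → A) → OnePoint G),
    IsSFT Φ ∧
    (letI : TopologicalSpace G := ⊥; letI : TopologicalSpace A := ⊥;
      Continuous (fun σ : Φ => π σ.1)) ∧
    (∀ g : G, ∃ σ ∈ Φ, π σ = (g : OnePoint G)) ∧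
    (Infinite G → ∃ σ ∈ Φ, π σ = OnePoint.infty) ∧
    (Finite G → ∀ σ ∈ Φ, π σ ≠ OnePoint.infty) ∧
    (∀ σ ∈ Φ, ∀ γ : G, π (fun g => σ (γ⁻¹ * g)) = ptTranslate γ (π σ)) ∧
    (∀ σ ∈ Φ, ∀ g : G, π σ = (g : OnePoint G) ↔ σ g = dollar)

/-- An infinite group with the property of special symbol is finitely generated. -/
theorem stmt15 (G : Type*) [Group G] [Infinite G] (h : HasSpecialSymbol G) :
    Group.FG G := by
  classical
  obtain ⟨A, _, dollar, Φ, π, ⟨F, M, hΦ⟩, -, hsurj, -, -, -, hiff⟩ := h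
  rw [Group.fg_iff]
  refine ⟨↑F, ?_, F.finite_toSet⟩
  by_contra hne
  set H := Subgroup.closure (↑F : Set G) with hH
  obtain ⟨g, hg⟩ : ∃ g : G, g ∉ H := by
    by_contra hc
    push_neg at hc
    exact hne (((Subgroup.eq_top_iff' _).mpr hc))
  obtain ⟨σ, hσΦ, hσπ⟩ := hsurj 1
  have hσ1 : σ 1 = dollar := (hiff σ hσΦ 1).mp hσπ
  set τ : G → A := fun x => if x ∈ H then σ x else σ (g⁻¹ * x) with hτ
  have hτΦ : τ ∈ Φ := by
    rw [hΦ] at hσΦ ⊢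
    intro γ
    by_cases hγ : γ ∈ H
    · have he : (fun f : F => τ (γ * f)) = (fun f : F => σ (γ * f)) := by
        funext f
        have : (γ * f : G) ∈ H := H.mul_mem hγ (Subgroup.subset_closure f.2)
        simp [hτ, this]
      rw [he]; exact hσΦ γ
    · have he : (fun f : F => τ (γ * f)) = (fun f : F => σ ((g⁻¹ * γ) * f)) := by
        funext f
        have hmem : (γ * f : G) ∉ H := fun hm => hγ (by
          have := H.mul_mem hm (H.inv_mem (Subgroup.subset_closure f.2))
          simpa [mul_assoc] using this)
        simp [hτ, hmem, mul_assoc]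
      rw [he]; exact hσΦ (g⁻¹ * γ)
  have h1 : τ 1 = dollar := by simp [hτ, H.one_mem, hσ1]
  have hgd : τ g = dollar := by simp [hτ, hg, hσ1]
  have e1 : π τ = ((1 : G) : OnePoint G) := (hiff τ hτΦ 1).mpr h1
  have e2 : π τ = (g : OnePoint G) := (hiff τ hτΦ g).mpr hgd
  have h1g : (1 : G) = g := OnePoint.coe_injective (e1.symm.trans e2)
  exact hg (h1g ▸ H.one_mem)
end

section
/- If a group Γ splits as a short exact sequence 1 → N → Γ → H → 1, and both N and H have the property of special symbol, then Γ has the property of special symbol. -/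
/-! ### Auxiliary: the canonical "dollar position" point map -/

open Classical in
/-- The point map reading off the unique position of the special symbol. -/
noncomputable def auxPi {G A : Type*} (d : A) (σ : G → A) : OnePoint G :=
  if h : ∃! g, σ g = d then (h.choose : OnePoint G) else OnePoint.infty

lemma auxPi_eq_coe_of {G A : Type*} {d : A} {σ : G → A} {g : G} (h1 : σ g = d)
    (h2 : ∀ y, σ y = d → y = g) : auxPi d σ = (g : OnePoint G) := by
  have hEU : ∃! y, σ y = d := ⟨g, h1, h2⟩
  unfold auxPi
  rw [dif_pos hEU]
  exact congrArg (fun z : G => (z : OnePoint G)) (h2 _ hEU.choose_spec.1)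

lemma auxPi_dollar {G A : Type*} {d : A} {σ : G → A} {g : G}
    (h : auxPi d σ = (g : OnePoint G)) : σ g = d := by
  unfold auxPi at h
  split at h
  · rename_i hEU
    have hc : hEU.choose = g := OnePoint.coe_eq_coe.mp h
    exact hc ▸ hEU.choose_spec.1
  · exact absurd h (OnePoint.infty_ne_coe g)

lemma auxPi_infty_of {G A : Type*} {d : A} {σ : G → A} (h : ∀ g, σ g ≠ d) :
    auxPi d σ = OnePoint.infty := by
  unfold auxPi
  rw [dif_neg]
  rintro ⟨g, hg, -⟩
  exact h g hg

lemma auxPi_continuous {G A : Type*} (d : A) (Φ : Set (G → A))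
    (huniq : ∀ σ ∈ Φ, ∀ g g' : G, σ g = d → σ g' = d → g = g') :
    (letI : TopologicalSpace G := ⊥; letI : TopologicalSpace A := ⊥;
      Continuous (fun σ : Φ => auxPi d σ.1)) := by
  letI : TopologicalSpace G := ⊥
  letI : TopologicalSpace A := ⊥
  haveI : DiscreteTopology G := ⟨rfl⟩
  haveI : DiscreteTopology A := ⟨rfl⟩
  rw [continuous_iff_continuousAt]
  intro σ₀
  show Filter.Tendsto (fun σ : Φ => auxPi d σ.1) (nhds σ₀) (nhds (auxPi d σ₀.1))
  by_cases hex : ∃ g, σ₀.1 g = d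
  · obtain ⟨g₀, hg₀⟩ := hex
    have hval : auxPi d σ₀.1 = (g₀ : OnePoint G) :=
      auxPi_eq_coe_of hg₀ (fun y hy => huniq _ σ₀.2 y g₀ hy hg₀)
    rw [hval]
    have hopen : IsOpen ((fun σ : Φ => σ.1 g₀) ⁻¹' {d}) :=
      (isOpen_discrete _).preimage ((continuous_apply g₀).comp continuous_subtype_val)
    have hev : (fun σ : Φ => auxPi d σ.1) =ᶠ[nhds σ₀] fun _ => (g₀ : OnePoint G) := by
      filter_upwards [hopen.mem_nhds (show σ₀ ∈ _ from hg₀)] with σ hσ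
      exact auxPi_eq_coe_of hσ (fun y hy => huniq _ σ.2 y g₀ hy hσ)
    exact tendsto_const_nhds.congr' hev.symm
  · have hval : auxPi d σ₀.1 = OnePoint.infty := auxPi_infty_of (fun g hg => hex ⟨g, hg⟩)
    rw [hval]
    rw [(OnePoint.hasBasis_nhds_infty (X := G)).tendsto_right_iff]
    rintro K ⟨-, hKc⟩
    have hKfin : K.Finite := hKc.finite_of_discrete
    have hopeq : {σ : Φ | ∀ g ∈ K, σ.1 g = σ₀.1 g} = ⋂ g ∈ K, (fun σ : Φ => σ.1 g) ⁻¹' {σ₀.1 g} := by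
      ext σ; simp
    have hopen : IsOpen {σ : Φ | ∀ g ∈ K, σ.1 g = σ₀.1 g} := by
      rw [hopeq]
      exact hKfin.isOpen_biInter fun g _ =>
        (isOpen_discrete _).preimage ((continuous_apply g).comp continuous_subtype_val)
    filter_upwards [hopen.mem_nhds (fun g _ => rfl)] with σ hσ
    by_cases hinfty : auxPi d σ.1 = OnePoint.infty
    · exact Set.mem_union_right _ (by simp [hinfty])
    · obtain ⟨g, hg⟩ := OnePoint.ne_infty_iff_exists.mp hinfty
      have hσg : σ.1 g = d := auxPi_dollar hg.symm
      have hgK : g ∉ K := fun hgK => hex ⟨g, (hσ g hgK) ▸ hσg⟩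
      exact Set.mem_union_left _ ⟨g, hgK, hg⟩

/-- If `1 → N → Γ → H → 1` is a short exact sequence of groups and both `N` and `H`
have the property of special symbol, then so does `Γ`. -/
theorem stmt17 (N Γ H : Type*) [Group N] [Group Γ] [Group H]
    (ι : N →* Γ) (ψ : Γ →* H)
    (hι : Function.Injective ι) (hψ : Function.Surjective ψ)
    (hexact : ι.range = ψ.ker)
    (hN : HasSpecialSymbol N) (hH : HasSpecialSymbol H) :
    HasSpecialSymbol Γ := by
  classical
  obtain ⟨A₁, i₁, d₁, Φ₁, π₁, ⟨F₁, M₁, hΦ₁⟩, -, hsurj₁, hinf₁, hfin₁, -, hdol₁⟩ := hN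
  obtain ⟨A₂, i₂, d₂, Φ₂, π₂, ⟨F₂, M₂, hΦ₂⟩, -, hsurj₂, hinf₂, hfin₂, -, hdol₂⟩ := hH
  haveI := i₁; haveI := i₂
  have mem₁ : ∀ σ : N → A₁, σ ∈ Φ₁ ↔ ∀ γ : N, (fun f : F₁ => σ (γ * f)) ∈ M₁ := by
    intro σ; rw [hΦ₁]; exact Iff.rfl
  have mem₂ : ∀ σ : H → A₂, σ ∈ Φ₂ ↔ ∀ γ : H, (fun f : F₂ => σ (γ * f)) ∈ M₂ := by
    intro σ; rw [hΦ₂]; exact Iff.rfl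
  have hψι : ∀ n : N, ψ (ι n) = 1 := by
    intro n
    have hn : ι n ∈ ι.range := ⟨n, rfl⟩
    rw [hexact] at hn
    exact MonoidHom.mem_ker.mp hn
  obtain ⟨s, hs⟩ : ∃ s : H → Γ, ∀ h, ψ (s h) = h :=
    ⟨fun h => (hψ h).choose, fun h => (hψ h).choose_spec⟩
  set ρ : Γ → N := fun γ => Function.invFun ι γ with hρdef
  have hρ : ∀ γ : Γ, ψ γ = 1 → ι (ρ γ) = γ := by
    intro γ hγ
    have hmem : γ ∈ ι.range := by rw [hexact]; exact MonoidHom.mem_ker.mpr hγ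
    obtain ⟨n, hn⟩ := hmem
    exact Function.invFun_eq ⟨n, hn⟩
  -- `N` is generated by the window `F₁`.
  have hSgen : ∀ n : N, n ∈ Subgroup.closure (F₁ : Set N) := by
    intro n
    by_contra hn
    obtain ⟨σa, ha, hπa⟩ := hsurj₁ 1
    obtain ⟨σb, hb, hπb⟩ := hsurj₁ n
    set τ : N → A₁ := fun m => if m ∈ Subgroup.closure (F₁ : Set N) then σa m else σb m with hτ
    have hτΦ : τ ∈ Φ₁ := by
      rw [mem₁]
      intro γ
      by_cases hγ : γ ∈ Subgroup.closure (F₁ : Set N)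
      · have hpat : (fun f : F₁ => τ (γ * f)) = fun f : F₁ => σa (γ * f) := by
          funext f
          have hmemf : γ * (f : N) ∈ Subgroup.closure (F₁ : Set N) :=
            mul_mem hγ (Subgroup.subset_closure f.2)
          simp only [hτ, if_pos hmemf]
        rw [hpat]
        exact (mem₁ σa).mp ha γ
      · have hpat : (fun f : F₁ => τ (γ * f)) = fun f : F₁ => σb (γ * f) := by
          funext f
          have hmemf : γ * (f : N) ∉ Subgroup.closure (F₁ : Set N) := by
            intro hmemf
            exact hγ (by simpa using mul_mem hmemf (inv_mem (Subgroup.subset_closure f.2)))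
          simp only [hτ, if_neg hmemf]
        rw [hpat]
        exact (mem₁ σb).mp hb γ
    have h1 : τ 1 = d₁ := by
      have h1' : σa 1 = d₁ := (hdol₁ σa ha 1).mp hπa
      simpa only [hτ, if_pos (one_mem _)] using h1'
    have h2 : τ n = d₁ := by
      have h2' : σb n = d₁ := (hdol₁ σb hb n).mp hπb
      simpa only [hτ, if_neg hn] using h2'
    have e1 : π₁ τ = ((1 : N) : OnePoint N) := (hdol₁ τ hτΦ 1).mpr h1
    have e2 : π₁ τ = (n : OnePoint N) := (hdol₁ τ hτΦ n).mpr h2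
    have h1n : (1 : N) = n := OnePoint.coe_eq_coe.mp (e1.symm.trans e2)
    exact hn (h1n ▸ one_mem _)
  -- The subshift for `Γ`.
  set Φ : Set (Γ → A₁ × A₂) := {σ | ∀ γ : Γ,
      ((fun f : F₁ => (σ (γ * ι f)).1) ∈ M₁) ∧
      (∀ t : F₁, (σ (γ * ι t)).2 = (σ γ).2) ∧
      ((fun f : F₂ => (σ (γ * s f)).2) ∈ M₂)} with hΦdef
  have memΦ : ∀ σ : Γ → A₁ × A₂, σ ∈ Φ ↔ ∀ γ : Γ,
      ((fun f : F₁ => (σ (γ * ι f)).1) ∈ M₁) ∧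
      (∀ t : F₁, (σ (γ * ι t)).2 = (σ γ).2) ∧
      ((fun f : F₂ => (σ (γ * s f)).2) ∈ M₂) := fun σ => Iff.rfl
  have La : ∀ σ ∈ Φ, ∀ γ : Γ, (fun f : F₁ => (σ (γ * ι f)).1) ∈ M₁ :=
    fun σ hσ γ => ((memΦ σ).mp hσ γ).1
  have Lb : ∀ σ ∈ Φ, ∀ γ : Γ, ∀ t : F₁, (σ (γ * ι t)).2 = (σ γ).2 :=
    fun σ hσ γ => ((memΦ σ).mp hσ γ).2.1
  have Lc : ∀ σ ∈ Φ, ∀ γ : Γ, (fun f : F₂ => (σ (γ * s f)).2) ∈ M₂ :=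
    fun σ hσ γ => ((memΦ σ).mp hσ γ).2.2
  -- second component is constant along cosets of `ι N`
  have Lconst : ∀ σ ∈ Φ, ∀ (n : N) (γ : Γ), (σ (γ * ι n)).2 = (σ γ).2 := by
    intro σ hσ n
    have h := hSgen n
    induction h using Subgroup.closure_induction with
    | mem x hx => intro γ; exact Lb σ hσ γ ⟨x, hx⟩
    | one => intro γ; simp
    | mul x y hx hy ihx ihy =>
        intro γ
        have e : γ * ι (x * y) = γ * ι x * ι y := by rw [map_mul, mul_assoc]
        rw [e, ihy (γ * ι x), ihx γ]
    | inv x hx ihx =>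
        intro γ
        have h' := ihx (γ * ι x⁻¹)
        have e : γ * ι x⁻¹ * ι x = γ := by
          rw [mul_assoc, ← map_mul, inv_mul_cancel, map_one, mul_one]
        rw [e] at h'
        exact h'.symm
  have L2a : ∀ σ ∈ Φ, ∀ γ : Γ, (σ γ).2 = (σ (s (ψ γ))).2 := by
    intro σ hσ γ
    have h1 : ψ ((s (ψ γ))⁻¹ * γ) = 1 := by
      rw [map_mul, map_inv, hs, inv_mul_cancel]
    have h2 : ι (ρ ((s (ψ γ))⁻¹ * γ)) = (s (ψ γ))⁻¹ * γ := hρ _ h1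
    have h3 := Lconst σ hσ (ρ ((s (ψ γ))⁻¹ * γ)) (s (ψ γ))
    rw [h2, mul_inv_cancel_left] at h3
    exact h3
  have L2b : ∀ σ ∈ Φ, (fun h : H => (σ (s h)).2) ∈ Φ₂ := by
    intro σ hσ
    rw [mem₂]
    intro h
    show (fun f : F₂ => (σ (s (h * f))).2) ∈ M₂
    have hpat : (fun f : F₂ => (σ (s (h * f))).2) = fun f : F₂ => (σ (s h * s f)).2 := by
      funext f
      have h' := L2a σ hσ (s h * s f)
      rw [map_mul, hs, hs] at h'
      exact h'.symm
    rw [hpat]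
    exact Lc σ hσ (s h)
  have L3 : ∀ σ ∈ Φ, ∀ c : Γ, (fun m : N => (σ (c * ι m)).1) ∈ Φ₁ := by
    intro σ hσ c
    rw [mem₁]
    intro m
    show (fun f : F₁ => (σ (c * ι (m * f))).1) ∈ M₁
    have hpat : (fun f : F₁ => (σ (c * ι (m * f))).1) = fun f : F₁ => (σ (c * ι m * ι f)).1 := by
      funext f; rw [map_mul, mul_assoc]
    rw [hpat]
    exact La σ hσ (c * ι m)
  -- uniqueness of the special symbol
  have K2 : ∀ σ ∈ Φ, ∀ γ γ' : Γ, σ γ = (d₁, d₂) → σ γ' = (d₁, d₂) → γ = γ' := by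
    intro σ hσ γ γ' h h'
    have hx := L2b σ hσ
    have e1 : (σ (s (ψ γ))).2 = d₂ := by rw [← L2a σ hσ γ, h]
    have e2 : (σ (s (ψ γ'))).2 = d₂ := by rw [← L2a σ hσ γ', h']
    have hψeq : ψ γ = ψ γ' := by
      have p1 := (hdol₂ _ hx (ψ γ)).mpr e1
      have p2 := (hdol₂ _ hx (ψ γ')).mpr e2
      exact OnePoint.coe_eq_coe.mp (p1.symm.trans p2)
    have hker : ψ (γ⁻¹ * γ') = 1 := by rw [map_mul, map_inv, hψeq, inv_mul_cancel]
    have hιρ : ι (ρ (γ⁻¹ * γ')) = γ⁻¹ * γ' := hρ _ hker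
    have hy := L3 σ hσ γ
    have q1 : (σ (γ * ι (1 : N))).1 = d₁ := by rw [map_one, mul_one, h]
    have q2 : (σ (γ * ι (ρ (γ⁻¹ * γ')))).1 = d₁ := by rw [hιρ, mul_inv_cancel_left, h']
    have r1 := (hdol₁ _ hy 1).mpr q1
    have r2 := (hdol₁ _ hy (ρ (γ⁻¹ * γ'))).mpr q2
    have hone : (1 : N) = ρ (γ⁻¹ * γ') := OnePoint.coe_eq_coe.mp (r1.symm.trans r2)
    have hfin : γ⁻¹ * γ' = 1 := by rw [← hιρ, ← hone, map_one]
    exact inv_mul_eq_one.mp hfin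
  -- building configurations from data on `N` and `H`
  have build : ∀ (b : H → Γ), (∀ h, ψ (b h) = h) →
      ∀ y : N → A₁, y ∈ Φ₁ → ∀ x : H → A₂, x ∈ Φ₂ →
      (fun γ : Γ => ((y (ρ ((b (ψ γ))⁻¹ * γ)), x (ψ γ)) : A₁ × A₂)) ∈ Φ := by
    intro b hb y hy x hx
    have hm : ∀ γ : Γ, ι (ρ ((b (ψ γ))⁻¹ * γ)) = (b (ψ γ))⁻¹ * γ := by
      intro γ
      apply hρ
      rw [map_mul, map_inv, hb, inv_mul_cancel]
    have hψn : ∀ (γ : Γ) (n : N), ψ (γ * ι n) = ψ γ := by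
      intro γ n; rw [map_mul, hψι, mul_one]
    have hmul : ∀ (γ : Γ) (n : N),
        ρ ((b (ψ (γ * ι n)))⁻¹ * (γ * ι n)) = ρ ((b (ψ γ))⁻¹ * γ) * n := by
      intro γ n
      apply hι
      have hz : ι (ρ ((b (ψ (γ * ι n)))⁻¹ * (γ * ι n))) = (b (ψ (γ * ι n)))⁻¹ * (γ * ι n) := by
        apply hρ
        rw [map_mul, map_inv, hb, inv_mul_cancel]
      rw [hz, hψn, map_mul, hm, mul_assoc]
    rw [memΦ]
    intro γ
    refine ⟨?_, ?_, ?_⟩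
    · show (fun f : F₁ => y (ρ ((b (ψ (γ * ι f)))⁻¹ * (γ * ι f)))) ∈ M₁
      have hpat : (fun f : F₁ => y (ρ ((b (ψ (γ * ι f)))⁻¹ * (γ * ι f)))) =
          fun f : F₁ => y (ρ ((b (ψ γ))⁻¹ * γ) * f) := by
        funext f; rw [hmul]
      rw [hpat]
      exact (mem₁ y).mp hy _
    · intro t
      show (x (ψ (γ * ι t)) : A₂) = x (ψ γ)
      rw [hψn]
    · show (fun f : F₂ => x (ψ (γ * s f))) ∈ M₂
      have hpat : (fun f : F₂ => x (ψ (γ * s f))) = fun f : F₂ => x (ψ γ * f) := by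
        funext f; rw [map_mul, hs]
      rw [hpat]
      exact (mem₂ x).mp hx _
  -- `Φ` is an SFT
  have hSFT : IsSFT Φ := by
    refine ⟨F₁.image ι ∪ F₂.image s ∪ {1},
      {p : ((F₁.image ι ∪ F₂.image s ∪ {1} : Finset Γ) : Type _) → A₁ × A₂ |
        ∃ σ' : Γ → A₁ × A₂,
          (∀ f : (F₁.image ι ∪ F₂.image s ∪ {1} : Finset Γ), σ' f = p f) ∧
          ((fun f : F₁ => (σ' (ι f)).1) ∈ M₁) ∧
          (∀ t : F₁, (σ' (ι t)).2 = (σ' 1).2) ∧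
          ((fun f : F₂ => (σ' (s f)).2) ∈ M₂)}, ?_⟩
    have memι : ∀ f : N, f ∈ F₁ → (ι f : Γ) ∈ (F₁.image ι ∪ F₂.image s ∪ {1} : Finset Γ) := by
      intro f hf
      simp only [Finset.mem_union, Finset.mem_image, Finset.mem_singleton]
      exact Or.inl (Or.inl ⟨f, hf, rfl⟩)
    have mems : ∀ f : H, f ∈ F₂ → (s f : Γ) ∈ (F₁.image ι ∪ F₂.image s ∪ {1} : Finset Γ) := by
      intro f hf
      simp only [Finset.mem_union, Finset.mem_image, Finset.mem_singleton]
      exact Or.inl (Or.inr ⟨f, hf, rfl⟩)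
    have mem1 : (1 : Γ) ∈ (F₁.image ι ∪ F₂.image s ∪ {1} : Finset Γ) := by
      simp
    ext σ
    simp only [Set.mem_setOf_eq]
    rw [memΦ]
    constructor
    · intro hσ γ
      refine ⟨fun g => σ (γ * g), fun f => rfl, ?_, ?_, ?_⟩
      · exact (hσ γ).1
      · intro t
        show (σ (γ * ι t)).2 = (σ (γ * 1)).2
        rw [mul_one]
        exact (hσ γ).2.1 t
      · exact (hσ γ).2.2
    · intro hσ γ
      obtain ⟨σ', hag, c1, c2, c3⟩ := hσ γ
      have hagF : ∀ (g : Γ) (hg : g ∈ (F₁.image ι ∪ F₂.image s ∪ {1} : Finset Γ)),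
          σ' g = σ (γ * g) := fun g hg => hag ⟨g, hg⟩
      refine ⟨?_, ?_, ?_⟩
      · have hpat : (fun f : F₁ => (σ (γ * ι f)).1) = fun f : F₁ => (σ' (ι f)).1 := by
          funext f; rw [hagF _ (memι f f.2)]
        rw [hpat]; exact c1
      · intro t
        have e1 := hagF _ (memι t t.2)
        have e2 : σ' 1 = σ γ := by rw [hagF _ mem1, mul_one]
        rw [← e1, ← e2]
        exact c2 t
      · have hpat : (fun f : F₂ => (σ (γ * s f)).2) = fun f : F₂ => (σ' (s f)).2 := by
          funext f; rw [hagF _ (mems f f.2)]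
        rw [hpat]; exact c3
  -- assemble
  refine ⟨A₁ × A₂, inferInstance, (d₁, d₂), Φ, fun σ => auxPi (d₁, d₂) σ,
    hSFT, ?_, ?_, ?_, ?_, ?_, ?_⟩
  · exact auxPi_continuous (d₁, d₂) Φ (fun σ hσ g g' hg hg' => K2 σ hσ g g' hg hg')
  · -- surjectivity
    intro g
    obtain ⟨x, hxΦ, hxπ⟩ := hsurj₂ (ψ g)
    obtain ⟨y, hyΦ, hyπ⟩ := hsurj₁ 1
    set b : H → Γ := fun h => if h = ψ g then g else s h with hbdef
    have hb : ∀ h, ψ (b h) = h := by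
      intro h
      by_cases hh : h = ψ g
      · simp [hbdef, hh]
      · simp [hbdef, hh, hs]
    have hσΦ := build b hb y hyΦ x hxΦ
    refine ⟨_, hσΦ, ?_⟩
    have hdolg : (fun γ : Γ => ((y (ρ ((b (ψ γ))⁻¹ * γ)), x (ψ γ)) : A₁ × A₂)) g = (d₁, d₂) := by
      have h2 : x (ψ g) = d₂ := (hdol₂ x hxΦ (ψ g)).mp hxπ
      have hbg : b (ψ g) = g := if_pos rfl
      have hmg : ρ ((b (ψ g))⁻¹ * g) = 1 := by
        apply hι
        rw [hρ _ (by rw [map_mul, map_inv, hb, inv_mul_cancel]), hbg, inv_mul_cancel, map_one]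
      have h1 : y 1 = d₁ := (hdol₁ y hyΦ 1).mp hyπ
      simp [hmg, h1, h2]
    exact auxPi_eq_coe_of hdolg (fun γ' h' => K2 _ hσΦ γ' g h' hdolg)
  · -- infinite case
    intro hΓinf
    have hcases : ¬ (Finite N ∧ Finite H) := by
      rintro ⟨hfN, hfH⟩
      have hinj : Function.Injective (fun γ : Γ => ((ρ ((s (ψ γ))⁻¹ * γ), ψ γ) : N × H)) := by
        intro γ γ' hEq
        have h1' : ψ γ = ψ γ' := congrArg Prod.snd hEq
        have h2' : ρ ((s (ψ γ))⁻¹ * γ) = ρ ((s (ψ γ'))⁻¹ * γ') := congrArg Prod.fst hEq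
        have e : ι (ρ ((s (ψ γ))⁻¹ * γ)) = (s (ψ γ))⁻¹ * γ :=
          hρ _ (by rw [map_mul, map_inv, hs, inv_mul_cancel])
        have e' : ι (ρ ((s (ψ γ'))⁻¹ * γ')) = (s (ψ γ'))⁻¹ * γ' :=
          hρ _ (by rw [map_mul, map_inv, hs, inv_mul_cancel])
        have : (s (ψ γ))⁻¹ * γ = (s (ψ γ'))⁻¹ * γ' := by rw [← e, ← e', h2']
        rw [h1'] at this
        exact mul_left_cancel this
      haveI := hfN; haveI := hfH
      haveI : Finite Γ := Finite.of_injective _ hinj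
      haveI := hΓinf
      exact not_finite Γ
    by_cases hNfin : Finite N
    · have hHinf : Infinite H := not_finite_iff_infinite.mp (fun h => hcases ⟨hNfin, h⟩)
      obtain ⟨x, hxΦ, hxπ⟩ := hinf₂ hHinf
      obtain ⟨y, hyΦ, hyπ⟩ := hsurj₁ 1
      refine ⟨_, build s hs y hyΦ x hxΦ, ?_⟩
      apply auxPi_infty_of
      intro γ hγ
      have h2 : x (ψ γ) = d₂ := congrArg Prod.snd hγ
      have := (hdol₂ x hxΦ (ψ γ)).mpr h2
      rw [this] at hxπ
      exact OnePoint.coe_ne_infty _ hxπ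
    · have hNinf : Infinite N := not_finite_iff_infinite.mp hNfin
      obtain ⟨y, hyΦ, hyπ⟩ := hinf₁ hNinf
      obtain ⟨x, hxΦ, hxπ⟩ := hsurj₂ 1
      refine ⟨_, build s hs y hyΦ x hxΦ, ?_⟩
      apply auxPi_infty_of
      intro γ hγ
      have h1 : y (ρ ((s (ψ γ))⁻¹ * γ)) = d₁ := congrArg Prod.fst hγ
      have := (hdol₁ y hyΦ _).mpr h1
      rw [this] at hyπ
      exact OnePoint.coe_ne_infty _ hyπ
  · -- finite case
    intro hΓfin σ hσ
    haveI : Finite N := Finite.of_injective ι hι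
    haveI : Finite H := Finite.of_surjective ψ hψ
    have hxΦ := L2b σ hσ
    have hne₂ := hfin₂ ‹Finite H› _ hxΦ
    obtain ⟨h0, hh0⟩ := OnePoint.ne_infty_iff_exists.mp hne₂
    have hx0 : (σ (s h0)).2 = d₂ := (hdol₂ _ hxΦ h0).mp hh0.symm
    have hyΦ := L3 σ hσ (s h0)
    have hne₁ := hfin₁ ‹Finite N› _ hyΦ
    obtain ⟨n0, hn0⟩ := OnePoint.ne_infty_iff_exists.mp hne₁
    have hy0 : (σ (s h0 * ι n0)).1 = d₁ := (hdol₁ _ hyΦ n0).mp hn0.symm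
    have hdolpt : σ (s h0 * ι n0) = (d₁, d₂) := by
      have h2' : (σ (s h0 * ι n0)).2 = d₂ := by
        rw [L2a σ hσ (s h0 * ι n0)]
        have : ψ (s h0 * ι n0) = h0 := by rw [map_mul, hψι, mul_one, hs]
        rw [this]
        exact hx0
      exact Prod.ext hy0 h2'
    show auxPi (d₁, d₂) σ ≠ OnePoint.infty
    rw [auxPi_eq_coe_of hdolpt (fun γ' h' => K2 σ hσ γ' _ h' hdolpt)]
    exact OnePoint.coe_ne_infty _
  · -- equivariance
    intro σ hσ γ
    show auxPi (d₁, d₂) (fun g => σ (γ⁻¹ * g)) = ptTranslate γ (auxPi (d₁, d₂) σ)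
    by_cases hex : ∃ g0 : Γ, σ g0 = (d₁, d₂)
    · obtain ⟨g0, hg0⟩ := hex
      have huniq : ∀ y', σ y' = (d₁, d₂) → y' = g0 := fun y' hy' => K2 σ hσ y' g0 hy' hg0
      have e1 : auxPi (d₁, d₂) σ = (g0 : OnePoint Γ) := auxPi_eq_coe_of hg0 huniq
      have e2 : auxPi (d₁, d₂) (fun g => σ (γ⁻¹ * g)) = ((γ * g0 : Γ) : OnePoint Γ) := by
        apply auxPi_eq_coe_of
        · show σ (γ⁻¹ * (γ * g0)) = (d₁, d₂)
          rw [inv_mul_cancel_left]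
          exact hg0
        · intro y' hy'
          have := huniq _ hy'
          rw [← this, mul_inv_cancel_left]
      rw [e1, e2]
      rfl
    · have e1 : auxPi (d₁, d₂) σ = OnePoint.infty :=
        auxPi_infty_of (fun g hg => hex ⟨g, hg⟩)
      have e2 : auxPi (d₁, d₂) (fun g => σ (γ⁻¹ * g)) = OnePoint.infty :=
        auxPi_infty_of (fun g hg => hex ⟨γ⁻¹ * g, hg⟩)
      rw [e1, e2]
      rfl
  · -- dollar characterization
    intro σ hσ g
    constructor
    · exact fun h => auxPi_dollar h
    · intro hg
      exact auxPi_eq_coe_of hg (fun y' hy' => K2 σ hσ y' g hy' hg)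
end
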